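/- arXiv:2311.17881 — 6 statements merged into one kernel-verified Lean document; each statement's English description precedes it below -/
import Mathlib

section
/- If a finite word w is dominant, then w is extremal and irreducible. -/
/-- The set `Σ` of infinite paths in the graph with edge relation `E`. -/
def InSigma (E : ℕ → ℕ → Prop) (a : ℕ → ℕ) : Prop :=
  ∀ n : ℕ, E (a n) (a (n + 1))

/-- The shift map `σ`. -/
def shiftSeq (a : ℕ → ℕ) : ℕ → ℕ := fun n => a (n + 1)

/-- The linear order on infinite sequences determined by the sign function `O`:
`a < b` iff they first differ at position `n` and `(∏_{k<n} O(a k)) * (a n - b n) < 0`. -/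
def SeqLt (O : ℕ → ℤ) (a b : ℕ → ℕ) : Prop :=
  ∃ n : ℕ, (∀ k < n, a k = b k) ∧
    (∏ k ∈ Finset.range n, O (a k)) * ((a n : ℤ) - (b n : ℤ)) < 0

def SeqLe (O : ℕ → ℤ) (a b : ℕ → ℕ) : Prop :=
  SeqLt O a b ∨ a = b

/-- An element of `Σ` is admissible if it starts with `N` and all its shifts are `≤` itself. -/
def AdmissibleSeq (E : ℕ → ℕ → Prop) (O : ℕ → ℤ) (N : ℕ) (a : ℕ → ℕ) : Prop :=
  InSigma E a ∧ a 0 = N ∧ ∀ n : ℕ, SeqLe O (shiftSeq^[n] a) a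

/-- `w^∞`, the periodic sequence repeating the finite word `w`. -/
def perSeq (w : List ℕ) : ℕ → ℕ := fun n => w.getD (n % w.length) 0

/-- The infinite sequence starting with the word `w` followed by the sequence `s`. -/
def wordThen (w : List ℕ) (s : ℕ → ℕ) : ℕ → ℕ :=
  fun n => if n < w.length then w.getD n 0 else s (n - w.length)

/-- `sgn(w) = ∏_k O(w_k)`. -/
def wordSgn (O : ℕ → ℤ) (w : List ℕ) : ℤ := (w.map O).prod

/-- The partial order on finite words determined by `O`. -/
def WordLt (O : ℕ → ℤ) (u v : List ℕ) : Prop :=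
  ∃ j : ℕ, j < min u.length v.length ∧ (∀ k < j, u.getD k 0 = v.getD k 0) ∧
    (∏ k ∈ Finset.range j, O (u.getD k 0)) * ((u.getD j 0 : ℤ) - (v.getD j 0 : ℤ)) < 0

/-- A finite word is periodic if `w^∞ ∈ Σ` and `w` starts with the letter `N`. -/
def PeriodicWord (E : ℕ → ℕ → Prop) (N : ℕ) (w : List ℕ) : Prop :=
  w ≠ [] ∧ InSigma E (perSeq w) ∧ w.getD 0 0 = N

/-- A finite word is irreducible if it is not a concatenation of two or more copies
of a shorter word. -/
def IrreducibleWord (w : List ℕ) : Prop :=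
  ∀ (u : List ℕ) (k : ℕ), 2 ≤ k → w ≠ (List.replicate k u).flatten

/-- A finite word is extremal if it is periodic and `w^∞` is admissible. -/
def ExtremalWord (E : ℕ → ℕ → Prop) (O : ℕ → ℤ) (N : ℕ) (w : List ℕ) : Prop :=
  PeriodicWord E N w ∧ AdmissibleSeq E O N (perSeq w)

/-- A finite word is admissible if it is extremal and has sign `1`. -/
def AdmissibleWord (E : ℕ → ℕ → Prop) (O : ℕ → ℤ) (N : ℕ) (w : List ℕ) : Prop :=
  ExtremalWord E O N w ∧ wordSgn O w = 1

/-- A finite word `w` is dominant if it is periodic and `Suff_k(wN) < Pre_k(w)`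
for all `2 ≤ k ≤ |w|`. -/
def DominantWord (E : ℕ → ℕ → Prop) (O : ℕ → ℤ) (N : ℕ) (w : List ℕ) : Prop :=
  PeriodicWord E N w ∧ ∀ k : ℕ, 2 ≤ k → k ≤ w.length →
    WordLt O ((w ++ [N]).drop (w.length + 1 - k)) (w.take k)

/-- `a' = Next(a)`: `a'` is the immediate successor of `a` among periodic words
of the same length. Equivalently, `a = Prev(a')`. -/
def IsNext (E : ℕ → ℕ → Prop) (O : ℕ → ℤ) (N : ℕ) (a a' : List ℕ) : Prop :=
  PeriodicWord E N a ∧ PeriodicWord E N a' ∧ a.length = a'.length ∧ WordLt O a a' ∧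
    ∀ u : List ℕ, PeriodicWord E N u → u.length = a.length →
      ¬(WordLt O a u ∧ WordLt O u a')

/-- `(a, a')` is a tuning pair: `a` admissible, `a'` extremal of sign `-1`, `a' = Next(a)`. -/
def TuningPair (E : ℕ → ℕ → Prop) (O : ℕ → ℤ) (N : ℕ) (a a' : List ℕ) : Prop :=
  AdmissibleWord E O N a ∧ ExtremalWord E O N a' ∧ wordSgn O a' = -1 ∧ IsNext E O N a a'

/-- Condition (1) of tunability for the word `wmin`. -/
def MinWord (E : ℕ → ℕ → Prop) (O : ℕ → ℤ) (N : ℕ) (wmin : List ℕ) : Prop :=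
  PeriodicWord E N wmin ∧ wmin.count N = 1 ∧ wordSgn O wmin = -1 ∧
    PeriodicWord E N (wmin ++ [N]) ∧
    ∀ u : List ℕ, PeriodicWord E N u → u.length = wmin.length + 1 →
      u = wmin ++ [N] ∨ WordLt O (wmin ++ [N]) u

/-- `(Γ, O)` is tunable with minimal word `wmin`. -/
def Tunable (E : ℕ → ℕ → Prop) (O : ℕ → ℤ) (N : ℕ) (wmin : List ℕ) : Prop :=
  MinWord E O N wmin ∧
    ∀ a : List ℕ, ExtremalWord E O N a → IrreducibleWord a → wordSgn O a = -1 →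
      (∃ k : ℕ, Odd k ∧ a = (List.replicate k wmin).flatten) ∨
        ∃ a' : List ℕ, TuningPair E O N a' a

/-- The edge relation of `Γ₂`, the complete directed graph on `{0, 1}`. -/
def E2 : ℕ → ℕ → Prop := fun i j => i ≤ 1 ∧ j ≤ 1

/-- The sign function `O₂` of the binary setting: `O₂ 0 = 1`, `O₂ 1 = -1`. -/
def O2 : ℕ → ℤ := fun k => if k = 0 then 1 else -1

/-- The tuning `w * v` of a tuning pair `(w, w')` by a finite binary word `v`. -/
def tuningWord (w w' : List ℕ) (v : List ℕ) : List ℕ :=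
  (v.map fun i => if i = 0 then w else w').flatten

/-- The tuning `w * v` of a tuning pair `(w, w')` by an infinite binary sequence `v`. -/
def tuningSeq (w w' : List ℕ) (v : ℕ → ℕ) : ℕ → ℕ :=
  fun n => (if v (n / w.length) = 0 then w else w').getD (n % w.length) 0

/-- A word can be written as a tuning `a * v` with `|v| > 1`. -/
def IsTuning (E : ℕ → ℕ → Prop) (O : ℕ → ℤ) (N : ℕ) (x : List ℕ) : Prop :=
  ∃ (a a' v : List ℕ), TuningPair E O N a a' ∧ AdmissibleWord E2 O2 1 v ∧
    1 < v.length ∧ x = tuningWord a a' v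

/-- An admissible word is nonrenormalizable if it cannot be written as a tuning. -/
def Nonrenormalizable (E : ℕ → ℕ → Prop) (O : ℕ → ℤ) (N : ℕ) (w : List ℕ) : Prop :=
  AdmissibleWord E O N w ∧ ¬ IsTuning E O N w

/-- `PS(w)`: the set of common proper prefixes/suffixes `v` of `w` with `w = yv = vz`, `z₀ = N`. -/
def PS (N : ℕ) (w : List ℕ) : Set (List ℕ) :=
  {v | 0 < v.length ∧ v.length < w.length ∧ (∃ y, w = y ++ v) ∧
    ∃ z, w = v ++ z ∧ z.getD 0 0 = N}

/-- `RS(w)`: the set of words `z` with `w = vz` for some `v ∈ PS(w)`. -/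
def RS (N : ℕ) (w : List ℕ) : Set (List ℕ) :=
  {z | ∃ v ∈ PS N w, w = v ++ z}

/-- There is a walk of length `n` from `i` to `j` in the graph `E`. -/
def HasWalk (E : ℕ → ℕ → Prop) (i j n : ℕ) : Prop :=
  ∃ a : ℕ → ℕ, a 0 = i ∧ a n = j ∧ ∀ k < n, E (a k) (a (k + 1))

/-- The standing assumptions on `(Γ, O)`: vertex set `{0, …, N}`, `O` takes values in `{±1}`,
and the graph is strongly connected and aperiodic (equivalently, primitive). -/
def GoodGraph (E : ℕ → ℕ → Prop) (O : ℕ → ℤ) (N : ℕ) : Prop :=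
  (∀ i j, E i j → i ≤ N ∧ j ≤ N) ∧
  (∀ i, i ≤ N → O i = 1 ∨ O i = -1) ∧
  (∃ m : ℕ, 0 < m ∧ ∀ i j, i ≤ N → j ≤ N → HasWalk E i j m)

/-!
If `0 < r < |w|`, dominance at `k = |w| + 1 - r` compares `Suff_k(wN)`, a prefix of the rotation
`σ^r(w^∞)`, with `Pre_k(w)`, a prefix of `w^∞`; so every proper shift of `w^∞` is strictly smaller
than `w^∞`. Since the shifts of `w^∞` are its rotations, this gives admissibility, and a
factorisation `w = u^k` with `k ≥ 2` would make the proper shift by `|u|` equal to `w^∞`.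
-/

lemma SeqLt.irrefl (O : ℕ → ℤ) (a : ℕ → ℕ) : ¬ SeqLt O a a := by
  rintro ⟨n, -, h⟩
  simp at h

lemma shiftSeq_iterate_apply (n : ℕ) (a : ℕ → ℕ) (m : ℕ) : shiftSeq^[n] a m = a (m + n) := by
  induction n generalizing m with
  | zero => rfl
  | succ n ih =>
    rw [Function.iterate_succ_apply', shiftSeq, ih]
    ring_nf

lemma shiftSeq_iterate_perSeq (w : List ℕ) (n : ℕ) :
    shiftSeq^[n] (perSeq w) = perSeq (w.rotate n) := by
  funext m
  rcases eq_or_ne w [] with rfl | hw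
  · simp [shiftSeq_iterate_apply, perSeq]
  have hm : m % w.length < w.length := Nat.mod_lt _ (List.length_pos_iff.mpr hw)
  simp only [shiftSeq_iterate_apply, perSeq, List.length_rotate, List.getD_eq_getElem?_getD,
    List.getElem?_rotate hm, Nat.mod_add_mod]

lemma perSeq_eq_getD_of_prefix {u v : List ℕ} (h : u <+: v) {i : ℕ} (hi : i < u.length) :
    perSeq v i = u.getD i 0 := by
  obtain ⟨t, rfl⟩ := h
  rw [perSeq, List.length_append, Nat.mod_eq_of_lt (by omega), List.getD_append _ _ _ _ hi]

lemma seqLt_perSeq_of_wordLt {O : ℕ → ℤ} {u v x y : List ℕ} (h : WordLt O u v)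
    (hu : u <+: x) (hv : v <+: y) : SeqLt O (perSeq x) (perSeq y) := by
  obtain ⟨j, hj, hagree, hlt⟩ := h
  have hx : ∀ i ≤ j, perSeq x i = u.getD i 0 := fun i hi =>
    perSeq_eq_getD_of_prefix hu (by omega)
  have hy : ∀ i ≤ j, perSeq y i = v.getD i 0 := fun i hi =>
    perSeq_eq_getD_of_prefix hv (by omega)
  refine ⟨j, fun k hk => by rw [hx k hk.le, hy k hk.le, hagree k hk], ?_⟩
  rwa [Finset.prod_congr rfl fun k hk => by rw [hx k (Finset.mem_range.mp hk).le], hx j le_rfl,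
    hy j le_rfl]

namespace DominantWord

variable {E : ℕ → ℕ → Prop} {O : ℕ → ℤ} {N : ℕ} {w : List ℕ}

lemma seqLt_perSeq_rotate (hw : DominantWord E O N w) {r : ℕ} (hr : 0 < r) (hrw : r < w.length) :
    SeqLt O (perSeq (w.rotate r)) (perSeq w) := by
  obtain ⟨⟨hne, -, hN⟩, hdom⟩ := hw
  have hsuff : (w ++ [N]).drop r <+: w.rotate r := by
    rw [List.drop_append_of_le_length hrw.le, List.rotate_eq_drop_append_take hrw.le,
      List.prefix_append_right_inj]
    obtain ⟨a, t, rfl⟩ := List.exists_cons_of_ne_nil hne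
    obtain ⟨r, rfl⟩ := Nat.exists_eq_add_one_of_ne_zero hr.ne'
    simp only [List.getD_cons_zero] at hN
    simp [hN]
  have h := hdom (w.length + 1 - r) (by omega) (by omega)
  rw [show w.length + 1 - (w.length + 1 - r) = r by omega] at h
  exact seqLt_perSeq_of_wordLt h hsuff (List.take_prefix _ _)

lemma extremalWord (hw : DominantWord E O N w) : ExtremalWord E O N w := by
  obtain ⟨hne, hsig, hN⟩ := hw.1
  refine ⟨hw.1, hsig, by simpa [perSeq] using hN, fun n => ?_⟩
  rw [shiftSeq_iterate_perSeq, ← List.rotate_mod]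
  rcases Nat.eq_zero_or_pos (n % w.length) with h0 | hpos
  · exact Or.inr (by rw [h0, List.rotate_zero])
  · exact Or.inl (hw.seqLt_perSeq_rotate hpos (Nat.mod_lt _ (List.length_pos_iff.mpr hne)))

lemma irreducibleWord (hw : DominantWord E O N w) : IrreducibleWord w := by
  rintro u k hk rfl
  obtain ⟨k, rfl⟩ := Nat.exists_eq_add_of_le' hk
  have hrot : ((List.replicate (k + 2) u).flatten).rotate u.length =
      (List.replicate (k + 2) u).flatten := by
    conv_lhs => rw [List.replicate_succ, List.flatten_cons, List.rotate_append_length_eq]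
    rw [← List.flatten_concat, ← List.replicate_succ']
  have hu : 0 < u.length := List.length_pos_iff.mpr <| by
    rintro rfl
    simp [DominantWord, PeriodicWord] at hw
  have hlt : u.length < ((List.replicate (k + 2) u).flatten).length := by
    simp only [List.length_flatten, List.map_replicate, List.sum_replicate, smul_eq_mul]
    nlinarith
  exact SeqLt.irrefl O _ (hrot ▸ hw.seqLt_perSeq_rotate hu hlt)

end DominantWord

theorem statement1_general (E : ℕ → ℕ → Prop) (O : ℕ → ℤ) (N : ℕ)
    (w : List ℕ) (hw : DominantWord E O N w) :
    ExtremalWord E O N w ∧ IrreducibleWord w :=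
  ⟨hw.extremalWord, hw.irreducibleWord⟩

/-- A dominant word is extremal and irreducible. -/
theorem statement1 (E : ℕ → ℕ → Prop) (O : ℕ → ℤ) (N : ℕ) (hG : GoodGraph E O N)
    (w : List ℕ) (hw : DominantWord E O N w) :
    ExtremalWord E O N w ∧ IrreducibleWord w :=
  statement1_general E O N w hw
end

section
/- Let a and b be finite words such that a^∞ ∈ Σ and b^∞ ∈ Σ and both a and b start with the letter N. Then: (1) (ab)^∞ ∈ Σ and (ba)^∞ ∈ Σ, where ab and ba denote the concatenations; (2) a^∞ > b^∞ if and only if ab > ba (as finite words). -/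
lemma perSeq_lt_len {w : List ℕ} {n : ℕ} (h : n < w.length) : perSeq w n = w.getD n 0 := by
  simp [perSeq, Nat.mod_eq_of_lt h]

lemma perSeq_add_len (w : List ℕ) (n : ℕ) : perSeq w (n + w.length) = perSeq w n := by
  simp [perSeq, Nat.add_mod_right]

lemma perSeq_append_period (a b : List ℕ) (n : ℕ) :
    perSeq (a ++ b) (n + (a.length + b.length)) = perSeq (a ++ b) n := by
  have := perSeq_add_len (a ++ b) n
  simpa using this

lemma perSeq_append_shift (a b : List ℕ) (ha : a ≠ []) (hb : b ≠ []) :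
    ∀ m, perSeq (a ++ b) (m + a.length) = perSeq (b ++ a) m := by
  have hL : 0 < a.length := List.length_pos_iff.mpr ha
  have hM : 0 < b.length := List.length_pos_iff.mpr hb
  intro m
  induction m using Nat.strong_induction_on with
  | _ m ih =>
    rcases lt_or_ge m b.length with h1 | h1
    · rw [perSeq_lt_len (show m + a.length < (a ++ b).length by simp; omega),
        List.getD_append_right a b 0 _ (by omega),
        perSeq_lt_len (show m < (b ++ a).length by simp; omega),
        List.getD_append b a 0 _ h1]
      congr 1; omega
    · rcases lt_or_ge m (a.length + b.length) with h2 | h2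
      · rw [show m + a.length = (m - b.length) + (a.length + b.length) by omega,
          perSeq_append_period,
          perSeq_lt_len (show m - b.length < (a ++ b).length by simp; omega),
          List.getD_append a b 0 _ (by omega),
          perSeq_lt_len (show m < (b ++ a).length by simp; omega),
          List.getD_append_right b a 0 _ h1]
      · have hR : perSeq (b ++ a) m = perSeq (b ++ a) (m - (a.length + b.length)) := by
          conv_lhs => rw [show m = (m - (a.length + b.length)) + (b.length + a.length) by omega]
          exact perSeq_append_period b a _
        rw [show m + a.length = ((m - (a.length + b.length)) + a.length) + (a.length + b.length)
            by omega, perSeq_append_period, hR]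
        exact ih _ (by omega)

lemma perSeq_append_agree (a b : List ℕ) (ha : a ≠ []) (hb : b ≠ []) (n : ℕ)
    (hag : ∀ k < n, perSeq a k = perSeq b k) :
    ∀ k, k ≤ n → perSeq (a ++ b) k = perSeq a k ∧ perSeq (b ++ a) k = perSeq b k := by
  have hL : 0 < a.length := List.length_pos_iff.mpr ha
  have hM : 0 < b.length := List.length_pos_iff.mpr hb
  intro k
  induction k using Nat.strong_induction_on with
  | _ k ih =>
    intro hk
    constructor
    · rcases lt_or_ge k a.length with h1 | h1
      · rw [perSeq_lt_len (show k < (a ++ b).length by simp; omega),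
          List.getD_append a b 0 _ h1, perSeq_lt_len h1]
      · have e1 : perSeq (a ++ b) k = perSeq (b ++ a) (k - a.length) := by
          conv_lhs => rw [show k = (k - a.length) + a.length by omega]
          exact perSeq_append_shift a b ha hb _
        have e2 : perSeq a k = perSeq a (k - a.length) := by
          conv_lhs => rw [show k = (k - a.length) + a.length by omega]
          exact perSeq_add_len a _
        rw [e1, e2, (ih _ (by omega) (by omega)).2]
        exact (hag _ (by omega)).symm
    · rcases lt_or_ge k b.length with h1 | h1
      · rw [perSeq_lt_len (show k < (b ++ a).length by simp; omega),
          List.getD_append b a 0 _ h1, perSeq_lt_len h1]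
      · have e1 : perSeq (b ++ a) k = perSeq (a ++ b) (k - b.length) := by
          conv_lhs => rw [show k = (k - b.length) + b.length by omega]
          exact perSeq_append_shift b a hb ha _
        have e2 : perSeq b k = perSeq b (k - b.length) := by
          conv_lhs => rw [show k = (k - b.length) + b.length by omega]
          exact perSeq_add_len b _
        rw [e1, e2, (ih _ (by omega) (by omega)).1]
        exact hag _ (by omega)

lemma seqLt_asymm {O : ℕ → ℤ} {s t : ℕ → ℕ} (h1 : SeqLt O s t) (h2 : SeqLt O t s) : False := by
  obtain ⟨j, hj1, hj2⟩ := h1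
  obtain ⟨m, hm1, hm2⟩ := h2
  have hne : ∀ (x y : ℕ → ℕ) (i : ℕ) (P : ℤ), P * ((x i : ℤ) - y i) < 0 → x i ≠ y i := by
    intro x y i P h heq
    rw [heq] at h; simp at h
  rcases lt_trichotomy j m with h | h | h
  · exact hne s t j _ hj2 (hm1 j h).symm
  · subst h
    have hprod : (∏ k ∈ Finset.range j, O (t k)) = ∏ k ∈ Finset.range j, O (s k) :=
      Finset.prod_congr rfl fun k hk => by rw [hj1 k (Finset.mem_range.mp hk)]
    rw [hprod] at hm2
    have h0 : (∏ k ∈ Finset.range j, O (s k)) * ((s j : ℤ) - t j)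
        + (∏ k ∈ Finset.range j, O (s k)) * ((t j : ℤ) - s j) = 0 := by ring
    linarith
  · exact hne t s m _ hm2 (hj1 m h).symm

lemma seqLt_tri {O : ℕ → ℤ} {N : ℕ} (hO : ∀ i, i ≤ N → O i = 1 ∨ O i = -1)
    {s t : ℕ → ℕ} (hs : ∀ n, s n ≤ N) (hst : s ≠ t) :
    SeqLt O s t ∨ SeqLt O t s := by
  have hex : ∃ n, s n ≠ t n := by
    by_contra h; push_neg at h; exact hst (funext h)
  classical
  set n := Nat.find hex with hn_def
  have hn : s n ≠ t n := Nat.find_spec hex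
  have hag : ∀ k < n, s k = t k := fun k hk => not_ne_iff.mp (Nat.find_min hex hk)
  have hP : (∏ k ∈ Finset.range n, O (s k)) ≠ 0 := by
    rw [Finset.prod_ne_zero_iff]
    intro k _
    rcases hO (s k) (hs k) with h | h <;> simp [h]
  have hd : ((s n : ℤ) - t n) ≠ 0 := by
    intro h
    exact hn (by exact_mod_cast sub_eq_zero.mp h)
  rcases lt_or_gt_of_ne (mul_ne_zero hP hd) with h | h
  · exact Or.inl ⟨n, hag, h⟩
  · refine Or.inr ⟨n, fun k hk => (hag k hk).symm, ?_⟩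
    have hprod : (∏ k ∈ Finset.range n, O (t k)) = ∏ k ∈ Finset.range n, O (s k) :=
      Finset.prod_congr rfl fun k hk => by rw [hag k (Finset.mem_range.mp hk)]
    rw [hprod]
    nlinarith

lemma inSigma_append (E : ℕ → ℕ → Prop) (N : ℕ) (a b : List ℕ)
    (haNe : a ≠ []) (haN : a.getD 0 0 = N) (haSig : InSigma E (perSeq a))
    (hbNe : b ≠ []) (hbN : b.getD 0 0 = N) (hbSig : InSigma E (perSeq b)) :
    InSigma E (perSeq (a ++ b)) := by
  have hL : 0 < a.length := List.length_pos_iff.mpr haNe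
  have hM : 0 < b.length := List.length_pos_iff.mpr hbNe
  have hprefix : ∀ k, k ≤ a.length → perSeq (a ++ b) k = perSeq a k := by
    intro k hk
    rcases lt_or_eq_of_le hk with h | h
    · rw [perSeq_lt_len (show k < (a ++ b).length by simp; omega),
        List.getD_append a b 0 _ h, perSeq_lt_len h]
    · have e1 : perSeq (a ++ b) k = N := by
        rw [perSeq_lt_len (show k < (a ++ b).length by simp; omega),
          List.getD_append_right a b 0 _ (by omega), show k - a.length = 0 by omega, hbN]
      have e2 : perSeq a k = N := by
        rw [show k = 0 + a.length by omega, perSeq_add_len, perSeq_lt_len hL, haN]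
      rw [e1, e2]
  have hsuffix : ∀ k, a.length ≤ k → k ≤ a.length + b.length →
      perSeq (a ++ b) k = perSeq b (k - a.length) := by
    intro k h1 h2
    rcases lt_or_eq_of_le h2 with h | h
    · rw [perSeq_lt_len (show k < (a ++ b).length by simp; omega),
        List.getD_append_right a b 0 _ (by omega), perSeq_lt_len (by omega)]
    · have e1 : perSeq (a ++ b) k = N := by
        rw [show k = 0 + (a.length + b.length) by omega, perSeq_append_period,
          perSeq_lt_len (show 0 < (a ++ b).length by simp; omega),
          List.getD_append a b 0 _ hL, haN]
      have e2 : perSeq b (k - a.length) = N := by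
        rw [show k - a.length = 0 + b.length by omega, perSeq_add_len, perSeq_lt_len hM, hbN]
      rw [e1, e2]
  intro n
  induction n using Nat.strong_induction_on with
  | _ n ih =>
    rcases le_or_gt (a.length + b.length) n with hn | hn
    · have e0 : perSeq (a ++ b) n = perSeq (a ++ b) (n - (a.length + b.length)) := by
        conv_lhs => rw [show n = (n - (a.length + b.length)) + (a.length + b.length) by omega]
        exact perSeq_append_period a b _
      have e1 : perSeq (a ++ b) (n + 1)
          = perSeq (a ++ b) ((n - (a.length + b.length)) + 1) := by
        conv_lhs => rw [show n + 1 = ((n - (a.length + b.length)) + 1) + (a.length + b.length)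
          by omega]
        exact perSeq_append_period a b _
      rw [e0, e1]
      exact ih _ (by omega)
    · rcases le_or_gt (n + 1) a.length with h1 | h1
      · rw [hprefix n (by omega), hprefix (n + 1) h1]
        exact haSig n
      · rw [hsuffix n (by omega) (by omega), hsuffix (n + 1) (by omega) (by omega),
          show n + 1 - a.length = (n - a.length) + 1 by omega]
        exact hbSig (n - a.length)

lemma perSeq_congr {u v : List ℕ} (hlen : u.length = v.length)
    (h : ∀ j < u.length, u.getD j 0 = v.getD j 0) : perSeq u = perSeq v := by
  funext n
  simp only [perSeq, ← hlen]
  rcases Nat.eq_zero_or_pos u.length with h0 | h0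
  · have hu : u = [] := List.length_eq_zero_iff.mp h0
    have hv : v = [] := List.length_eq_zero_iff.mp (hlen ▸ h0)
    simp [hu, hv]
  · exact h _ (Nat.mod_lt _ h0)

lemma wordLt_append_of_seqLt (O : ℕ → ℤ) (a b : List ℕ) (ha : a ≠ []) (hb : b ≠ [])
    (h : SeqLt O (perSeq b) (perSeq a)) : WordLt O (b ++ a) (a ++ b) := by
  have hL : 0 < a.length := List.length_pos_iff.mpr ha
  have hM : 0 < b.length := List.length_pos_iff.mpr hb
  obtain ⟨n, hag, hlt⟩ := h
  have key := perSeq_append_agree a b ha hb n (fun k hk => (hag k hk).symm)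
  have hXY : ∀ k < n, perSeq (b ++ a) k = perSeq (a ++ b) k := by
    intro k hk
    rw [(key k (le_of_lt hk)).2, (key k (le_of_lt hk)).1, hag k hk]
  have hne : perSeq b n ≠ perSeq a n := by
    intro hEq
    rw [hEq] at hlt; simp at hlt
  have hnK : n < a.length + b.length := by
    by_contra hge
    push_neg at hge
    have hgd : ∀ j < (b ++ a : List ℕ).length, (b ++ a).getD j 0 = (a ++ b).getD j 0 := by
      intro j hj
      have hj' : j < a.length + b.length := by simp at hj; omega
      have := hXY j (lt_of_lt_of_le hj' hge)
      rwa [perSeq_lt_len hj, perSeq_lt_len (show j < (a ++ b).length by simp; omega)] at this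
    have heq : perSeq (b ++ a) = perSeq (a ++ b) := perSeq_congr (by simp; omega) hgd
    have hmod := congrFun heq n
    rw [(key n le_rfl).2, (key n le_rfl).1] at hmod
    exact hne hmod
  refine ⟨n, by simp; omega, ?_, ?_⟩
  · intro k hk
    have := hXY k hk
    rwa [perSeq_lt_len (show k < (b ++ a).length by simp; omega),
      perSeq_lt_len (show k < (a ++ b).length by simp; omega)] at this
  · have hprod : (∏ k ∈ Finset.range n, O ((b ++ a).getD k 0))
        = ∏ k ∈ Finset.range n, O (perSeq b k) := by
      apply Finset.prod_congr rfl
      intro k hk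
      have hk' := Finset.mem_range.mp hk
      rw [← perSeq_lt_len (show k < (b ++ a).length by simp; omega), (key k (by omega)).2]
    rw [hprod,
      show ((b ++ a).getD n 0 : ℤ) = (perSeq b n : ℤ) by
        rw [← perSeq_lt_len (show n < (b ++ a).length by simp; omega), (key n le_rfl).2],
      show ((a ++ b).getD n 0 : ℤ) = (perSeq a n : ℤ) by
        rw [← perSeq_lt_len (show n < (a ++ b).length by simp; omega), (key n le_rfl).1]]
    exact hlt

lemma seqLt_of_wordLt (O : ℕ → ℤ) (u v : List ℕ) (h : WordLt O u v) :
    SeqLt O (perSeq u) (perSeq v) := by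
  obtain ⟨j, hj, hag, hlt⟩ := h
  refine ⟨j, ?_, ?_⟩
  · intro k hk
    rw [perSeq_lt_len (by omega), perSeq_lt_len (by omega)]
    exact hag k hk
  · have hprod : (∏ k ∈ Finset.range j, O (perSeq u k))
        = ∏ k ∈ Finset.range j, O (u.getD k 0) := by
      apply Finset.prod_congr rfl
      intro k hk
      rw [perSeq_lt_len (show k < u.length by have := Finset.mem_range.mp hk; omega)]
    rw [hprod, perSeq_lt_len (show j < u.length by omega),
      perSeq_lt_len (show j < v.length by omega)]
    exact hlt


/-- If `a^∞, b^∞ ∈ Σ` and both `a` and `b` start with the letter `N`, then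
`(ab)^∞, (ba)^∞ ∈ Σ`, and `a^∞ > b^∞` iff `ab > ba` as finite words. -/
theorem statement2 (E : ℕ → ℕ → Prop) (O : ℕ → ℤ) (N : ℕ) (hG : GoodGraph E O N)
    (a b : List ℕ)
    (haNe : a ≠ []) (haN : a.getD 0 0 = N) (haSig : InSigma E (perSeq a))
    (hbNe : b ≠ []) (hbN : b.getD 0 0 = N) (hbSig : InSigma E (perSeq b)) :
    (InSigma E (perSeq (a ++ b)) ∧ InSigma E (perSeq (b ++ a))) ∧
      (SeqLt O (perSeq b) (perSeq a) ↔ WordLt O (b ++ a) (a ++ b)) := by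
  obtain ⟨hE, hO, -⟩ := hG
  refine ⟨⟨inSigma_append E N a b haNe haN haSig hbNe hbN hbSig,
    inSigma_append E N b a hbNe hbN hbSig haNe haN haSig⟩,
    fun h => wordLt_append_of_seqLt O a b haNe hbNe h, fun hW => ?_⟩
  have hYX : SeqLt O (perSeq (b ++ a)) (perSeq (a ++ b)) := seqLt_of_wordLt O _ _ hW
  by_cases hAB : perSeq a = perSeq b
  · exfalso
    have hX : ∀ j, perSeq (b ++ a) j = perSeq (a ++ b) j := by
      intro j
      have key := perSeq_append_agree a b haNe hbNe j (fun k _ => congrFun hAB k) j le_rfl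
      rw [key.2, key.1, hAB]
    obtain ⟨n, -, hlt⟩ := hYX
    rw [hX n] at hlt
    simp at hlt
  · have hs : ∀ n, perSeq a n ≤ N := fun n => (hE _ _ (haSig n)).1
    rcases seqLt_tri hO hs hAB with h | h
    · exact absurd hYX
        (fun hyx => seqLt_asymm
          (seqLt_of_wordLt O _ _ (wordLt_append_of_seqLt O b a hbNe haNe h)) hyx)
    · exact h
end

section
/- Let a and b be finite words such that a^∞ ∈ Σ and b^∞ ∈ Σ and both a and b start with the letter N. Then the following are equivalent: (i) a^∞ > b^∞; (ii) a·b^∞ > b^∞; (iii) b·a^∞ < a^∞. Here a·b^∞ denotes the infinite sequence beginning with the word a followed by b^∞. -/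
namespace St3Aux

lemma wordThen_lt (w : List ℕ) (p : ℕ → ℕ) {k : ℕ} (hk : k < w.length) :
    wordThen w p k = w.getD k 0 := if_pos hk

lemma wordThen_ge (w : List ℕ) (p : ℕ → ℕ) (k : ℕ) :
    wordThen w p (w.length + k) = p k := by
  simp [wordThen]

lemma wordSgn_eq_prod (O : ℕ → ℤ) (w : List ℕ) :
    wordSgn O w = ∏ k ∈ Finset.range w.length, O (w.getD k 0) := by
  induction w with
  | nil => simp [wordSgn]
  | cons x xs ih =>
      rw [List.length_cons, Finset.prod_range_succ']
      simp only [List.getD_cons_succ, List.getD_cons_zero]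
      rw [← ih]
      simp [wordSgn, mul_comm]

lemma prod_wordThen (O : ℕ → ℤ) (w : List ℕ) (p : ℕ → ℕ) (j : ℕ) :
    ∏ k ∈ Finset.range (w.length + j), O (wordThen w p k)
      = wordSgn O w * ∏ k ∈ Finset.range j, O (p k) := by
  rw [Finset.prod_range_add, wordSgn_eq_prod]
  congr 1
  · exact Finset.prod_congr rfl fun k hk => by
      rw [wordThen_lt w p (Finset.mem_range.1 hk)]
  · exact Finset.prod_congr rfl fun k hk => by rw [wordThen_ge]

lemma seqLt_wordThen_iff (O : ℕ → ℤ) (w : List ℕ) (p q : ℕ → ℕ) :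
    SeqLt O (wordThen w p) (wordThen w q) ↔
      ∃ j, (∀ k < j, p k = q k) ∧
        wordSgn O w * ((∏ k ∈ Finset.range j, O (p k)) * ((p j : ℤ) - (q j : ℤ))) < 0 := by
  constructor
  · rintro ⟨m, hag, hlt⟩
    have hm : w.length ≤ m := by
      by_contra h
      push_neg at h
      rw [wordThen_lt w p h, wordThen_lt w q h] at hlt
      simp at hlt
    obtain ⟨j, rfl⟩ : ∃ j, m = w.length + j := ⟨m - w.length, by omega⟩
    refine ⟨j, fun k hk => ?_, ?_⟩
    · have := hag (w.length + k) (by omega)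
      rwa [wordThen_ge, wordThen_ge] at this
    · rw [prod_wordThen, wordThen_ge, wordThen_ge, mul_assoc] at hlt
      exact hlt
  · rintro ⟨j, hag, hlt⟩
    refine ⟨w.length + j, fun k hk => ?_, ?_⟩
    · by_cases h : k < w.length
      · rw [wordThen_lt w p h, wordThen_lt w q h]
      · push_neg at h
        obtain ⟨i, rfl⟩ : ∃ i, k = w.length + i := ⟨k - w.length, by omega⟩
        rw [wordThen_ge, wordThen_ge, hag i (by omega)]
    · rw [prod_wordThen, wordThen_ge, wordThen_ge, mul_assoc]
      exact hlt

lemma A1 (O : ℕ → ℤ) (w : List ℕ) (hε : wordSgn O w = 1) (p q : ℕ → ℕ) :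
    SeqLt O (wordThen w p) (wordThen w q) ↔ SeqLt O p q := by
  rw [seqLt_wordThen_iff, hε]
  simp only [one_mul]
  rfl

lemma A2 (O : ℕ → ℤ) (w : List ℕ) (hε : wordSgn O w = -1) (p q : ℕ → ℕ) :
    SeqLt O (wordThen w p) (wordThen w q) ↔ SeqLt O q p := by
  rw [seqLt_wordThen_iff, hε]
  constructor
  · rintro ⟨j, hag, hlt⟩
    refine ⟨j, fun k hk => (hag k hk).symm, ?_⟩
    have h1 : (∏ k ∈ Finset.range j, O (q k)) = ∏ k ∈ Finset.range j, O (p k) :=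
      Finset.prod_congr rfl fun k hk => by rw [hag k (Finset.mem_range.1 hk)]
    rw [h1]
    nlinarith [hlt]
  · rintro ⟨j, hag, hlt⟩
    refine ⟨j, fun k hk => (hag k hk).symm, ?_⟩
    have h1 : (∏ k ∈ Finset.range j, O (q k)) = ∏ k ∈ Finset.range j, O (p k) :=
      Finset.prod_congr rfl fun k hk => by rw [hag k (Finset.mem_range.1 hk)]
    rw [h1] at hlt
    nlinarith [hlt]

lemma perSeq_periodic (w : List ℕ) (k : ℕ) : perSeq w (k + w.length) = perSeq w k := by
  simp [perSeq, Nat.add_mod_right]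

lemma perSeq_lt (w : List ℕ) {k : ℕ} (hk : k < w.length) : perSeq w k = w.getD k 0 := by
  simp [perSeq, Nat.mod_eq_of_lt hk]

lemma perSeq_fix (w : List ℕ) : wordThen w (perSeq w) = perSeq w := by
  funext k
  unfold wordThen
  split
  · next h => rw [perSeq_lt w h]
  · next h =>
      push_neg at h
      obtain ⟨i, rfl⟩ : ∃ i, k = i + w.length := ⟨k - w.length, by omega⟩
      rw [Nat.add_sub_cancel, perSeq_periodic]

lemma t_decomp (w : List ℕ) (t : ℕ → ℕ) (h : ∀ k < w.length, t k = perSeq w k) :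
    wordThen w (fun k => t (k + w.length)) = t := by
  funext k
  unfold wordThen
  split
  · next hk => rw [h k hk, perSeq_lt w hk]
  · next hk =>
      push_neg at hk
      show t (k - w.length + w.length) = t k
      congr 1
      omega

end St3Aux

namespace St3Aux

lemma base (O : ℕ → ℤ) (w : List ℕ) {t : ℕ → ℕ} {n : ℕ} (hn : n < w.length)
    (hag : ∀ k < n, t k = perSeq w k) (hne : t n ≠ perSeq w n)
    (r : ℕ → ℕ) (hr : ∀ k < w.length, r k = perSeq w k) :
    SeqLt O t r ↔ (∏ k ∈ Finset.range n, O (t k)) * ((t n : ℤ) - (perSeq w n : ℤ)) < 0 := by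
  constructor
  · rintro ⟨m, hagm, hlt⟩
    have hne' : t m ≠ r m := by intro h; rw [h] at hlt; simp at hlt
    have hmn : m = n := by
      rcases lt_trichotomy m n with h | h | h
      · exact absurd ((hag m h).trans (hr m (h.trans hn)).symm) hne'
      · exact h
      · exact absurd ((hagm n h).trans (hr n hn)) hne
    rw [hmn] at hlt
    rwa [hr n hn] at hlt
  · intro hlt
    refine ⟨n, fun k hk => ?_, ?_⟩
    · rw [hag k hk, hr k (hk.trans hn)]
    · rwa [hr n hn]

lemma base' (O : ℕ → ℤ) (w : List ℕ) {t : ℕ → ℕ} {n : ℕ} (hn : n < w.length)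
    (hag : ∀ k < n, t k = perSeq w k) (hne : t n ≠ perSeq w n)
    (r : ℕ → ℕ) (hr : ∀ k < w.length, r k = perSeq w k) :
    SeqLt O r t ↔ (∏ k ∈ Finset.range n, O (t k)) * ((perSeq w n : ℤ) - (t n : ℤ)) < 0 := by
  have hp : ∏ k ∈ Finset.range n, O (r k) = ∏ k ∈ Finset.range n, O (t k) :=
    Finset.prod_congr rfl fun k hk => by
      rw [hr k ((Finset.mem_range.1 hk).trans hn), ← hag k (Finset.mem_range.1 hk)]
  constructor
  · rintro ⟨m, hagm, hlt⟩
    have hne' : r m ≠ t m := by intro h; rw [h] at hlt; simp at hlt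
    have hmn : m = n := by
      rcases lt_trichotomy m n with h | h | h
      · exact absurd ((hr m (h.trans hn)).trans (hag m h).symm) hne'
      · exact h
      · exact absurd ((hagm n h).symm.trans (hr n hn)) hne
    rw [hmn] at hlt
    rwa [hp, hr n hn] at hlt
  · intro hlt
    refine ⟨n, fun k hk => ?_, ?_⟩
    · rw [hag k hk, hr k (hk.trans hn)]
    · rwa [hp, hr n hn]

lemma key (O : ℕ → ℤ) (w : List ℕ) (hw : w ≠ [])
    (hε : wordSgn O w = 1 ∨ wordSgn O w = -1) :
    ∀ n, ∀ t : ℕ → ℕ, (∀ k < n, t k = perSeq w k) → t n ≠ perSeq w n →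
      (SeqLt O t (wordThen w t) ↔ SeqLt O t (perSeq w)) ∧
      (SeqLt O (wordThen w t) t ↔ SeqLt O (perSeq w) t) := by
  intro n
  induction n using Nat.strong_induction_on with
  | _ n ih =>
    intro t hag hne
    by_cases hn : n < w.length
    · have hu : ∀ k < w.length, wordThen w t k = perSeq w k := fun k hk => by
        rw [wordThen_lt w t hk, perSeq_lt w hk]
      have hx : ∀ k < w.length, perSeq w k = perSeq w k := fun k _ => rfl
      exact ⟨(base O w hn hag hne _ hu).trans (base O w hn hag hne _ hx).symm,
             (base' O w hn hag hne _ hu).trans (base' O w hn hag hne _ hx).symm⟩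
    · push_neg at hn
      have hwpos : 0 < w.length := List.length_pos_iff.mpr hw
      set s : ℕ → ℕ := fun k => t (k + w.length) with hs
      have ht : wordThen w s = t := t_decomp w t (fun k hk => hag k (lt_of_lt_of_le hk hn))
      have hagx : ∀ k < n - w.length, s k = perSeq w k := by
        intro k hk
        show t (k + w.length) = _
        rw [hag (k + w.length) (by omega), perSeq_periodic]
      have hper : perSeq w (n - w.length) = perSeq w n := by
        conv_rhs => rw [show n = (n - w.length) + w.length by omega]
        rw [perSeq_periodic]
      have hnex : s (n - w.length) ≠ perSeq w (n - w.length) := by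
        show t (n - w.length + w.length) ≠ _
        rw [show n - w.length + w.length = n by omega, hper]
        exact hne
      have hC := ih (n - w.length) (by omega) s hagx hnex
      rw [ht] at hC
      rcases hε with h1 | h1
      · have A := A1 O w h1
        constructor
        · calc SeqLt O t (wordThen w t)
              ↔ SeqLt O (wordThen w s) (wordThen w t) := by rw [ht]
            _ ↔ SeqLt O s t := A s t
            _ ↔ SeqLt O s (perSeq w) := hC.1
            _ ↔ SeqLt O (wordThen w s) (wordThen w (perSeq w)) := (A s (perSeq w)).symm
            _ ↔ SeqLt O t (perSeq w) := by rw [ht, perSeq_fix]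
        · calc SeqLt O (wordThen w t) t
              ↔ SeqLt O (wordThen w t) (wordThen w s) := by rw [ht]
            _ ↔ SeqLt O t s := A t s
            _ ↔ SeqLt O (perSeq w) s := hC.2
            _ ↔ SeqLt O (wordThen w (perSeq w)) (wordThen w s) := (A _ s).symm
            _ ↔ SeqLt O (perSeq w) t := by rw [ht, perSeq_fix]
      · have A := A2 O w h1
        constructor
        · calc SeqLt O t (wordThen w t)
              ↔ SeqLt O (wordThen w s) (wordThen w t) := by rw [ht]
            _ ↔ SeqLt O t s := A s t
            _ ↔ SeqLt O (perSeq w) s := hC.2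
            _ ↔ SeqLt O (wordThen w s) (wordThen w (perSeq w)) := (A s (perSeq w)).symm
            _ ↔ SeqLt O t (perSeq w) := by rw [ht, perSeq_fix]
        · calc SeqLt O (wordThen w t) t
              ↔ SeqLt O (wordThen w t) (wordThen w s) := by rw [ht]
            _ ↔ SeqLt O s t := A t s
            _ ↔ SeqLt O s (perSeq w) := hC.1
            _ ↔ SeqLt O (wordThen w (perSeq w)) (wordThen w s) := (A _ s).symm
            _ ↔ SeqLt O (perSeq w) t := by rw [ht, perSeq_fix]

lemma prod_pm (f : ℕ → ℤ) :
    ∀ n, (∀ k < n, f k = 1 ∨ f k = -1) →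
      (∏ k ∈ Finset.range n, f k = 1 ∨ ∏ k ∈ Finset.range n, f k = -1) := by
  intro n
  induction n with
  | zero => intro _; simp
  | succ n ihn =>
      intro h
      rw [Finset.prod_range_succ]
      rcases ihn (fun k hk => h k (by omega)) with h1 | h1 <;>
        rcases h n (by omega) with h2 | h2 <;> simp [h1, h2]

end St3Aux

open St3Aux in
/-- If `a^∞, b^∞ ∈ Σ` and both `a` and `b` start with the letter `N`, then
the following are equivalent: `a^∞ > b^∞`; `a·b^∞ > b^∞`; `b·a^∞ < a^∞`. -/
theorem statement3 (E : ℕ → ℕ → Prop) (O : ℕ → ℤ) (N : ℕ) (hG : GoodGraph E O N)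
    (a b : List ℕ)
    (haNe : a ≠ []) (haN : a.getD 0 0 = N) (haSig : InSigma E (perSeq a))
    (hbNe : b ≠ []) (hbN : b.getD 0 0 = N) (hbSig : InSigma E (perSeq b)) :
    (SeqLt O (perSeq b) (perSeq a) ↔ SeqLt O (perSeq b) (wordThen a (perSeq b))) ∧
    (SeqLt O (perSeq b) (perSeq a) ↔ SeqLt O (wordThen b (perSeq a)) (perSeq a)) := by
  obtain ⟨hE, hO, -⟩ := hG
  have hsga : wordSgn O a = 1 ∨ wordSgn O a = -1 := by
    rw [wordSgn_eq_prod]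
    apply prod_pm
    intro k hk
    apply hO
    rw [← perSeq_lt a hk]
    exact (hE _ _ (haSig k)).1
  have hsgb : wordSgn O b = 1 ∨ wordSgn O b = -1 := by
    rw [wordSgn_eq_prod]
    apply prod_pm
    intro k hk
    apply hO
    rw [← perSeq_lt b hk]
    exact (hE _ _ (hbSig k)).1
  constructor
  · by_cases hbx : perSeq b = perSeq a
    · rw [hbx, perSeq_fix]
    · have hex : ∃ n, perSeq b n ≠ perSeq a n := by
        by_contra h
        push_neg at h
        exact hbx (funext h)
      exact (key O a haNe hsga (Nat.find hex) (perSeq b)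
        (fun k hk => not_not.mp (Nat.find_min hex hk)) (Nat.find_spec hex)).1.symm
  · by_cases hax : perSeq a = perSeq b
    · rw [hax, perSeq_fix]
    · have hex : ∃ n, perSeq a n ≠ perSeq b n := by
        by_contra h
        push_neg at h
        exact hax (funext h)
      exact (key O b hbNe hsgb (Nat.find hex) (perSeq a)
        (fun k hk => not_not.mp (Nat.find_min hex hk)) (Nat.find_spec hex)).2.symm
end

section
/- Let w be a dominant word with sgn(w) = 1, let v be an admissible and irreducible word with v^∞ < w^∞, and let n be a positive integer such that n·|v| < |w|. Then the concatenation w v^n (w followed by n copies of v) is an admissible word. -/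
/-! ### Auxiliary lemmas for `statement5` -/

private lemma S5_shift_iter (a : ℕ → ℕ) (j k : ℕ) : (shiftSeq^[j]) a k = a (k + j) := by
  induction j generalizing a with
  | zero => rfl
  | succ j ih =>
    rw [Function.iterate_succ_apply]
    rw [ih (shiftSeq a)]
    rfl

private lemma S5_shift_iter' (a : ℕ → ℕ) (j k : ℕ) : (shiftSeq^[j]) a k = a (j + k) := by
  rw [S5_shift_iter, Nat.add_comm]

private lemma S5_wit_unique {O : ℕ → ℤ} {x y : ℕ → ℕ} {e e' : ℕ}
    (h1 : ∀ k, k < e → x k = y k)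
    (h2 : (∏ k ∈ Finset.range e, O (x k)) * ((x e : ℤ) - y e) < 0)
    (h1' : ∀ k, k < e' → x k = y k)
    (h2' : (∏ k ∈ Finset.range e', O (x k)) * ((x e' : ℤ) - y e') < 0) : e = e' := by
  by_contra hne
  rcases Nat.lt_or_ge e e' with h | h
  · rw [h1' e h] at h2; simp at h2
  · have h' : e' < e := by omega
    rw [h1 e' h'] at h2'; simp at h2'

private lemma S5_le_lt_wit {O : ℕ → ℤ} {x y z : ℕ → ℕ} {d : ℕ}
    (hxy : SeqLe O x y)
    (h1 : ∀ k, k < d → y k = z k)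
    (h2 : (∏ k ∈ Finset.range d, O (y k)) * ((y d : ℤ) - z d) < 0) :
    ∃ e, e ≤ d ∧ (∀ k, k < e → x k = z k) ∧
      (∏ k ∈ Finset.range e, O (x k)) * ((x e : ℤ) - z e) < 0 := by
  rcases hxy with ⟨e₁, g1, g2⟩ | rfl
  · rcases lt_trichotomy e₁ d with h | h | h
    · refine ⟨e₁, h.le, fun k hk => (g1 k hk).trans (h1 k (hk.trans h)), ?_⟩
      rw [← h1 e₁ h]; exact g2
    · subst h
      refine ⟨e₁, le_rfl, fun k hk => (g1 k hk).trans (h1 k hk), ?_⟩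
      have hp : (∏ k ∈ Finset.range e₁, O (y k)) = ∏ k ∈ Finset.range e₁, O (x k) :=
        Finset.prod_congr rfl (fun k hk => by rw [g1 k (Finset.mem_range.mp hk)])
      rw [hp] at h2
      have hiden : (∏ k ∈ Finset.range e₁, O (x k)) * ((x e₁ : ℤ) - z e₁)
          = (∏ k ∈ Finset.range e₁, O (x k)) * ((x e₁ : ℤ) - y e₁)
          + (∏ k ∈ Finset.range e₁, O (x k)) * ((y e₁ : ℤ) - z e₁) := by ring
      rw [hiden]
      linarith
    · refine ⟨d, le_rfl, fun k hk => (g1 k (hk.trans h)).trans (h1 k hk), ?_⟩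
      have hp : (∏ k ∈ Finset.range d, O (y k)) = ∏ k ∈ Finset.range d, O (x k) :=
        Finset.prod_congr rfl (fun k hk => by rw [g1 k ((Finset.mem_range.mp hk).trans h)])
      rw [g1 d h, ← hp]
      exact h2
  · exact ⟨d, le_rfl, h1, h2⟩

private lemma S5_prod_pm (O : ℕ → ℤ) (x : ℕ → ℕ) (t : ℕ)
    (h : ∀ k, O (x k) = 1 ∨ O (x k) = -1) :
    (∏ k ∈ Finset.range t, O (x k)) = 1 ∨ (∏ k ∈ Finset.range t, O (x k)) = -1 := by
  induction t with
  | zero => left; simp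
  | succ t ih =>
    rw [Finset.prod_range_succ]
    rcases ih with h1 | h1 <;> rcases h t with h2 | h2 <;> rw [h1, h2] <;> norm_num

private lemma S5_getD_flat (v : List ℕ) (m s : ℕ) (hs : s < m * v.length) :
    ((List.replicate m v).flatten).getD s 0 = v.getD (s % v.length) 0 := by
  induction m generalizing s with
  | zero => simp at hs
  | succ m ih =>
    rw [List.replicate_succ, List.flatten_cons]
    rcases Nat.lt_or_ge s v.length with h | h
    · rw [List.getD_append _ _ 0 s h, Nat.mod_eq_of_lt h]
    · have hexp : (m + 1) * v.length = m * v.length + v.length := by ring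
      rw [List.getD_append_right _ _ 0 s h, ih (s - v.length) (by omega),
        ← Nat.mod_eq_sub_mod h]

private lemma S5_sgn_flat (O : ℕ → ℤ) (v : List ℕ) (m : ℕ) :
    wordSgn O ((List.replicate m v).flatten) = (wordSgn O v) ^ m := by
  induction m with
  | zero => simp [wordSgn]
  | succ m ih =>
    rw [List.replicate_succ, List.flatten_cons]
    show ((v ++ (List.replicate m v).flatten).map O).prod = _
    rw [List.map_append, List.prod_append, pow_succ]
    show wordSgn O v * wordSgn O ((List.replicate m v).flatten) = _
    rw [ih]
    ring

private lemma S5_lemA {E : ℕ → ℕ → Prop} {O : ℕ → ℤ} {N : ℕ} {w : List ℕ}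
    (hw : DominantWord E O N w) (a : ℕ → ℕ)
    (ha : ∀ k, k < w.length → a k = w.getD k 0) (haN : a w.length = N)
    (i : ℕ) (h1 : 1 ≤ i) (h2 : i < w.length) :
    ∃ r, (∀ k, k < r → a (i + k) = a k) ∧
      (∏ k ∈ Finset.range r, O (a (i + k))) * ((a (i + r) : ℤ) - a r) < 0 := by
  obtain ⟨j₀, hj₀, hagree, hsign⟩ := hw.2 (w.length + 1 - i) (by omega) (by omega)
  have hii : w.length + 1 - (w.length + 1 - i) = i := by omega
  rw [hii] at hj₀ hagree hsign
  have hlen1 : ((w ++ [N]).drop i).length = w.length + 1 - i := by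
    simp [List.length_drop]
  have hlen2 : (w.take (w.length + 1 - i)).length = w.length + 1 - i := by
    rw [List.length_take]; omega
  rw [hlen1, hlen2, min_self] at hj₀
  have key1 : ∀ p, p ≤ w.length - i → ((w ++ [N]).drop i).getD p 0 = a (i + p) := by
    intro p hp
    have hd : ((w ++ [N]).drop i).getD p 0 = (w ++ [N]).getD (i + p) 0 := by
      simp [List.getD_eq_getElem?_getD, List.getElem?_drop]
    rw [hd]
    rcases Nat.lt_or_ge (i + p) w.length with h | h
    · rw [List.getD_append _ _ 0 _ h, ha (i + p) h]
    · have hip : i + p = w.length := by omega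
      rw [hip, List.getD_append_right _ _ 0 _ le_rfl, Nat.sub_self, haN]
      rfl
  have key2 : ∀ p, p < w.length + 1 - i → (w.take (w.length + 1 - i)).getD p 0 = a p := by
    intro p hp
    have h1' : (w.take (w.length + 1 - i)).getD p 0 = w.getD p 0 := by
      simp [List.getD_eq_getElem?_getD, List.getElem?_take, hp]
    rw [h1', ha p (by omega)]
  refine ⟨j₀, ?_, ?_⟩
  · intro k hk
    have h := hagree k hk
    rw [key1 k (by omega), key2 k (by omega)] at h
    exact h
  · have hpr : (∏ k ∈ Finset.range j₀, O (((w ++ [N]).drop i).getD k 0))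
        = ∏ k ∈ Finset.range j₀, O (a (i + k)) :=
      Finset.prod_congr rfl fun k hk => by
        rw [key1 k (by have := Finset.mem_range.mp hk; omega)]
    rw [hpr, key1 j₀ (by omega), key2 j₀ hj₀] at hsign
    exact hsign

/-- If `w` is dominant with `sgn(w) = 1`, `v` is admissible and irreducible
with `v^∞ < w^∞`, and `n` is a positive integer with `n·|v| < |w|`, then `w v^n` is
admissible. -/
theorem statement5 (E : ℕ → ℕ → Prop) (O : ℕ → ℤ) (N : ℕ) (hG : GoodGraph E O N)
    (w v : List ℕ)
    (hw : DominantWord E O N w) (hwsgn : wordSgn O w = 1)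
    (hv : AdmissibleWord E O N v) (hvirr : IrreducibleWord v)
    (hlt : SeqLt O (perSeq v) (perSeq w))
    (n : ℕ) (hn : 0 < n) (hlen : n * v.length < w.length) :
    AdmissibleWord E O N (w ++ (List.replicate n v).flatten) := by
  classical
  obtain ⟨hEbd, hOpm, -⟩ := id hG
  obtain ⟨⟨hwne, hwSig, hw0⟩, -⟩ := id hw
  obtain ⟨⟨⟨hvne, hvSigP, hv0⟩, -, -, hvshift⟩, hvsgnv⟩ := id hv
  have hvlen : 0 < v.length := List.length_pos_iff.mpr hvne
  set M := n * v.length with hMdef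
  have hnv1 : 1 ≤ M := by rw [hMdef]; exact Nat.mul_pos hn hvlen
  have hwlen2 : 2 ≤ w.length := by omega
  set u := w ++ (List.replicate n v).flatten with hu
  have hflatlen : ((List.replicate n v).flatten).length = M := by
    rw [hMdef]; simp [List.length_flatten]
  set L := w.length + M with hLdef
  have huL : u.length = L := by
    rw [hu, hLdef, List.length_append, hflatlen]
  have hL1 : 1 < L := by omega
  set W := perSeq w with hWdef
  set V := perSeq v with hVdef
  set a := perSeq u with haDef
  have hWval : ∀ k, W k = w.getD (k % w.length) 0 := fun k => by rw [hWdef]; rfl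
  have hVval : ∀ k, V k = v.getD (k % v.length) 0 := fun k => by rw [hVdef]; rfl
  have haval : ∀ m, a m = u.getD (m % L) 0 := fun m => by
    rw [haDef]; show u.getD (m % u.length) 0 = _; rw [huL]
  have hu_lt : ∀ k, k < w.length → u.getD k 0 = w.getD k 0 := fun k hk => by
    rw [hu]; exact List.getD_append _ _ 0 k hk
  have hu_ge : ∀ k, w.length ≤ k → k < L → u.getD k 0 = v.getD ((k - w.length) % v.length) 0 := by
    intro k h1 h2
    rw [hu, List.getD_append_right _ _ 0 k h1]
    exact S5_getD_flat v n _ (hMdef ▸ (by omega : k - w.length < M))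
  have haw : ∀ k, k < w.length → a k = w.getD k 0 := fun k hk => by
    rw [haval, Nat.mod_eq_of_lt (by omega), hu_lt k hk]
  have hav : ∀ k, w.length ≤ k → k < L → a k = v.getD ((k - w.length) % v.length) 0 :=
    fun k h1 h2 => by rw [haval, Nat.mod_eq_of_lt h2, hu_ge k h1 h2]
  have hWN : W w.length = N := by rw [hWval w.length, Nat.mod_self]; exact hw0
  have haN : a w.length = N := by
    rw [hav w.length le_rfl (by omega), Nat.sub_self, Nat.zero_mod]
    exact hv0
  have haW : ∀ k, k ≤ w.length → a k = W k := by
    intro k hk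
    rcases Nat.lt_or_ge k w.length with h | h
    · rw [haw k h, hWval k, Nat.mod_eq_of_lt h]
    · have hk' : k = w.length := by omega
      rw [hk', haN, hWN]
  have ha0 : a 0 = N := by
    rw [haW 0 (by omega), hWval 0, Nat.zero_mod]; exact hw0
  have haper : ∀ m, a (m + L) = a m := fun m => by
    rw [haval, haval, Nat.add_mod_right]
  have hashift : ∀ m, shiftSeq^[m] a = shiftSeq^[m % L] a := by
    intro m; funext k
    rw [S5_shift_iter, S5_shift_iter, haval, haval]
    congr 1
    conv_lhs => rw [Nat.add_mod]
    conv_rhs => rw [Nat.add_mod]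
    rw [Nat.mod_mod_of_dvd m (dvd_refl L)]
  have hVle : ∀ k, V k ≤ N := fun k => (hEbd _ _ (hvSigP k)).1
  have hWw : ∀ k, k < w.length → W k = w.getD k 0 := fun k hk => by
    rw [hWval k, Nat.mod_eq_of_lt hk]
  -- the sequence a is an infinite path
  have hSiga : InSigma E a := by
    intro m
    have e2 : a (m + 1) = u.getD ((m % L + 1) % L) 0 := by
      rw [haval (m + 1)]
      congr 1
      conv_lhs => rw [Nat.add_mod]
      conv_rhs => rw [Nat.add_mod]
      rw [Nat.mod_mod_of_dvd m (dvd_refl L)]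
    rw [haval m, e2]
    set r := m % L with hrdef
    have hrL : r < L := by rw [hrdef]; exact Nat.mod_lt _ (by omega)
    rcases Nat.lt_or_ge (r + 1) w.length with h | h
    · rw [Nat.mod_eq_of_lt (show r + 1 < L by omega), hu_lt r (by omega), hu_lt (r + 1) h]
      have h3 := hwSig r
      rw [hWval r, hWval (r + 1), Nat.mod_eq_of_lt (show r < w.length by omega),
        Nat.mod_eq_of_lt h] at h3
      exact h3
    · rcases Nat.lt_or_ge r w.length with h2 | h2
      · have hr1' : r + 1 = w.length := by omega
        rw [Nat.mod_eq_of_lt (show r + 1 < L by omega), hu_lt r h2,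
          hu_ge (r + 1) (by omega) (by omega), hr1', Nat.sub_self, Nat.zero_mod, hv0]
        have h3 := hwSig r
        rw [hWval r, hWval (r + 1), Nat.mod_eq_of_lt h2, hr1', Nat.mod_self, hw0] at h3
        exact h3
      · rcases Nat.lt_or_ge (r + 1) L with h3 | h3
        · rw [Nat.mod_eq_of_lt h3, hu_ge r h2 hrL, hu_ge (r + 1) (by omega) h3]
          have h4 := hvSigP (r - w.length)
          rw [hVval (r - w.length), hVval (r - w.length + 1)] at h4
          have h5 : r + 1 - w.length = r - w.length + 1 := by omega
          rw [h5]
          exact h4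
        · have hr1' : r + 1 = L := by omega
          rw [hr1', Nat.mod_self, hu_lt 0 (by omega), hu_ge r h2 hrL, hw0]
          have h4 := hvSigP (r - w.length)
          rw [hVval (r - w.length), hVval (r - w.length + 1)] at h4
          have h5 : r - w.length + 1 = M := by omega
          rw [h5, hMdef, Nat.mul_mod_left, hv0] at h4
          exact h4
  -- the main comparison
  have main : ∀ i, 1 ≤ i → i < L → SeqLt O (shiftSeq^[i] a) a := by
    intro i hi1 hi2
    have hSeq : ∀ r : ℕ, ((∀ k, k < r → a (i + k) = a k) ∧
        (∏ k ∈ Finset.range r, O (a (i + k))) * ((a (i + r) : ℤ) - a r) < 0) →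
        SeqLt O (shiftSeq^[i] a) a := by
      intro r hr
      refine ⟨r, ?_, ?_⟩
      · intro k hk
        rw [S5_shift_iter']
        exact hr.1 k hk
      · simp only [S5_shift_iter']
        exact hr.2
    rcases Nat.lt_or_ge i w.length with hA | hB
    · -- Case A : shift starts inside w, use dominance
      obtain ⟨r, hr1, hr2⟩ := S5_lemA hw a haw haN i hi1 hA
      exact hSeq r ⟨hr1, hr2⟩
    · -- Case B : shift starts inside the v-blocks
      obtain ⟨t, hti⟩ : ∃ t, i = w.length + t := ⟨i - w.length, by omega⟩
      have htlt : t < M := by omega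
      set P := M - t with hPdef
      have hP1 : 1 ≤ P := by omega
      have hiP : i + P = L := by omega
      have hPw : P < w.length := by omega
      have hPt : P + t = M := by omega
      set x := shiftSeq^[t % v.length] V with hxdef
      have hxval : ∀ k, x k = v.getD ((k + t % v.length) % v.length) 0 := by
        intro k; rw [hxdef, S5_shift_iter]; exact hVval _
      have hmod : ∀ k : ℕ, (k + t % v.length) % v.length = (k + t) % v.length := by
        intro k
        conv_rhs => rw [Nat.add_mod]
        conv_lhs => rw [Nat.add_mod]
        rw [Nat.mod_mod_of_dvd t (dvd_refl v.length)]
      have hPj : (P + t % v.length) % v.length = 0 := by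
        rw [hmod P, hPt, hMdef, Nat.mul_mod_left]
      have hxa : ∀ k, k ≤ P → a (i + k) = x k := by
        intro k hk
        rcases Nat.lt_or_ge k P with h | h
        · rw [hav (i + k) (by omega) (by omega), hxval k, hmod k]
          have h6 : i + k - w.length = k + t := by omega
          rw [h6]
        · have hkP : k = P := by omega
          have h7 : i + k = 0 + L := by omega
          rw [h7, haper 0, ha0, hxval k, hkP, hPj]
          exact hv0.symm
      have hxtail : ∀ k, x (P + k) = V k := by
        intro k
        rw [hxval (P + k), hVval k]
        congr 1
        have h8 : P + k + t % v.length = k + (P + t % v.length) := by ring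
        rw [h8, Nat.add_mod k (P + t % v.length) v.length, hPj, Nat.add_zero,
          Nat.mod_mod_of_dvd k (dvd_refl v.length)]
      have hatail : ∀ k, a (i + (P + k)) = a k := by
        intro k
        have h9 : i + (P + k) = k + L := by omega
        rw [h9, haper k]
      have hxle : SeqLe O x V := by rw [hxdef]; exact hvshift _
      obtain ⟨d, hd1, hd2⟩ := id hlt
      obtain ⟨e, hed, he1, he2⟩ := S5_le_lt_wit hxle hd1 hd2
      rcases le_or_gt e P with heP | hPe
      · -- the first difference occurs inside the v-blocks
        refine hSeq e ⟨?_, ?_⟩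
        · intro k hk
          rw [hxa k (by omega), he1 k hk, ← haW k (by omega)]
        · have hpr : (∏ k ∈ Finset.range e, O (a (i + k))) = ∏ k ∈ Finset.range e, O (x k) :=
            Finset.prod_congr rfl fun k hk => by
              rw [hxa k (by have := Finset.mem_range.mp hk; omega)]
          rw [hpr, hxa e heP, haW e (by omega)]
          exact he2
      · -- agreement extends past the v-blocks
        obtain ⟨g, hg1, hgeq⟩ : ∃ g, 1 ≤ g ∧ e = P + g := ⟨e - P, by omega, by omega⟩
        have hOx : ∀ k, O (x k) = 1 ∨ O (x k) = -1 := by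
          intro k
          have hxV : x k = V (k + t % v.length) := by rw [hxdef, S5_shift_iter]
          rw [hxV]
          exact hOpm _ (hVle _)
        rcases S5_prod_pm O x P hOx with hrho | hrho
        · -- sign +1 : impossible
          exfalso
          have hvW1 : ∀ k, k < g → V k = W (P + k) := by
            intro k hk
            have h := he1 (P + k) (by omega)
            rw [hxtail k] at h
            exact h
          have hdag : (∏ k ∈ Finset.range g, O (V k)) * ((V g : ℤ) - W (P + g)) < 0 := by
            rw [hgeq, Finset.prod_range_add] at he2
            rw [hrho, one_mul] at he2
            have hq : (∏ k ∈ Finset.range g, O (x (P + k))) = ∏ k ∈ Finset.range g, O (V k) :=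
              Finset.prod_congr rfl fun k hk => by rw [hxtail k]
            rw [hq, hxtail g] at he2
            exact he2
          have hWN' : W w.length = N := hWN
          obtain ⟨r₀, hr₀1, hr₀2⟩ := S5_lemA hw W hWw hWN P hP1 hPw
          rcases lt_trichotomy g r₀ with hc | hc | hc
          · have w1 : ∀ k, k < g → V k = W k := fun k hk =>
              (hvW1 k hk).trans (hr₀1 k (by omega))
            have w2 : (∏ k ∈ Finset.range g, O (V k)) * ((V g : ℤ) - W g) < 0 := by
              rw [← hr₀1 g hc]
              exact hdag
            have := S5_wit_unique w1 w2 hd1 hd2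
            omega
          · have w1 : ∀ k, k < g → V k = W k := fun k hk =>
              (hvW1 k hk).trans (hr₀1 k (by omega))
            have hpi : (∏ k ∈ Finset.range g, O (W (P + k))) = ∏ k ∈ Finset.range g, O (V k) :=
              Finset.prod_congr rfl fun k hk => by rw [hvW1 k (Finset.mem_range.mp hk)]
            have h4 : (∏ k ∈ Finset.range g, O (V k)) * ((W (P + g) : ℤ) - W g) < 0 := by
              have h5 := hr₀2
              rw [← hc] at h5
              rw [hpi] at h5
              exact h5
            have hiden : (∏ k ∈ Finset.range g, O (V k)) * ((V g : ℤ) - W g)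
                = (∏ k ∈ Finset.range g, O (V k)) * ((V g : ℤ) - W (P + g))
                + (∏ k ∈ Finset.range g, O (V k)) * ((W (P + g) : ℤ) - W g) := by ring
            have w2 : (∏ k ∈ Finset.range g, O (V k)) * ((V g : ℤ) - W g) < 0 := by
              rw [hiden]; linarith
            have := S5_wit_unique w1 w2 hd1 hd2
            omega
          · have w1 : ∀ k, k < r₀ → V k = W k := fun k hk =>
              (hvW1 k (by omega)).trans (hr₀1 k hk)
            have hpi : (∏ k ∈ Finset.range r₀, O (W (P + k))) = ∏ k ∈ Finset.range r₀, O (V k) :=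
              Finset.prod_congr rfl fun k hk => by
                rw [hvW1 k (by have := Finset.mem_range.mp hk; omega)]
            have w2 : (∏ k ∈ Finset.range r₀, O (V k)) * ((V r₀ : ℤ) - W r₀) < 0 := by
              rw [hvW1 r₀ hc, ← hpi]
              exact hr₀2
            have := S5_wit_unique w1 w2 hd1 hd2
            omega
        · -- sign -1 : twisted comparison via dominance
          obtain ⟨r, hr1, hr2⟩ := S5_lemA hw a haw haN P hP1 hPw
          refine hSeq (P + r) ⟨?_, ?_⟩
          · intro k hk
            rcases le_or_gt k P with h | h
            · rw [hxa k h, he1 k (by omega), ← haW k (by omega)]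
            · have hk2 : k = P + (k - P) := by omega
              rw [hk2, hatail (k - P), hr1 (k - P) (by omega)]
          · rw [Finset.prod_range_add]
            have hp1 : (∏ k ∈ Finset.range P, O (a (i + k))) = -1 := by
              have hq : (∏ k ∈ Finset.range P, O (a (i + k))) = ∏ k ∈ Finset.range P, O (x k) :=
                Finset.prod_congr rfl fun k hk => by
                  rw [hxa k (le_of_lt (Finset.mem_range.mp hk))]
              rw [hq, hrho]
            have hp2 : (∏ k ∈ Finset.range r, O (a (i + (P + k)))) = ∏ k ∈ Finset.range r, O (a k) :=
              Finset.prod_congr rfl fun k hk => by rw [hatail k]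
            have hp3 : (∏ k ∈ Finset.range r, O (a (P + k))) = ∏ k ∈ Finset.range r, O (a k) :=
              Finset.prod_congr rfl fun k hk => by rw [hr1 k (Finset.mem_range.mp hk)]
            rw [hp1, hp2, hatail r]
            rw [hp3] at hr2
            have hring : ((-1 : ℤ) * ∏ k ∈ Finset.range r, O (a k)) * ((a r : ℤ) - a (P + r))
                = (∏ k ∈ Finset.range r, O (a k)) * ((a (P + r) : ℤ) - a r) := by ring
            linarith [hr2, hring]
  -- assembly
  have hune : u ≠ [] := by
    rw [hu]; intro hcon
    exact hwne (List.append_eq_nil_iff.mp hcon).1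
  have hu0 : u.getD 0 0 = N := by
    rw [hu, List.getD_append _ _ 0 0 (by omega)]; exact hw0
  refine ⟨⟨⟨hune, ?_, hu0⟩, ?_, ?_, ?_⟩, ?_⟩
  · rw [← haDef]; exact hSiga
  · rw [← haDef]; exact hSiga
  · rw [← haDef]; exact ha0
  · intro m
    rw [← haDef, hashift m]
    rcases Nat.eq_zero_or_pos (m % L) with h0 | hpos
    · rw [h0]; right; rfl
    · left; exact main _ hpos (Nat.mod_lt _ (by omega))
  · have hsplit : wordSgn O u = wordSgn O w * wordSgn O ((List.replicate n v).flatten) := by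
      rw [hu]
      show ((w ++ (List.replicate n v).flatten).map O).prod = _
      rw [List.map_append, List.prod_append]
      rfl
    rw [hsplit, hwsgn, S5_sgn_flat, hvsgnv, one_pow, one_mul]
end

section
/- Let Γ₂ be the complete directed graph on vertex set {0, 1} (with all four edges) and let O₂(0) = 1, O₂(1) = −1. Then (Γ₂, O₂) is tunable. In particular: w_min = 1 (the single-letter word 1) satisfies condition (1) of tunability, and for every extremal irreducible word a with sgn(a) = −1 that is not a power of the letter 1, the word a' obtained from a by flipping its last letter (0 ↔ 1) is admissible, equals Prev(a), and (a', a) is a tuning pair. -/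
/-- The word obtained from a binary word by flipping its last letter (`0 ↔ 1`). -/
def flipLast (a : List ℕ) : List ℕ :=
  a.take (a.length - 1) ++ [1 - a.getD (a.length - 1) 0]

namespace S6

lemma O2_ne (k : ℕ) : O2 k ≠ 0 := by unfold O2; split <;> simp

lemma O2_eq {x : ℕ} (hx : x ≤ 1) : O2 x = 1 - 2 * (x:ℤ) := by
  interval_cases x <;> simp [O2]

lemma sgnP_unit (x : ℕ → ℕ) (m : ℕ) :
    (∏ k ∈ Finset.range m, O2 (x k)) = 1 ∨ (∏ k ∈ Finset.range m, O2 (x k)) = -1 := by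
  induction m with
  | zero => simp
  | succ m ih =>
    rw [Finset.prod_range_succ]
    have : O2 (x m) = 1 ∨ O2 (x m) = -1 := by unfold O2; split <;> simp
    rcases ih with h | h <;> rcases this with h2 | h2 <;> simp [h, h2]

lemma shift_iterate (x : ℕ → ℕ) (r : ℕ) : shiftSeq^[r] x = fun k => x (k + r) := by
  induction r with
  | zero => simp
  | succ r ih =>
    rw [Function.iterate_succ_apply', ih]
    funext k
    simp only [shiftSeq]
    ring_nf

lemma seqLt_witness {x y : ℕ → ℕ} (h : SeqLt O2 x y) (q : ℕ)
    (hag : ∀ k < q, x k = y k) (hne : x q ≠ y q) :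
    (∏ k ∈ Finset.range q, O2 (x k)) * ((x q : ℤ) - y q) < 0 := by
  obtain ⟨m, h1, h2⟩ := h
  rcases lt_trichotomy m q with hc | hc | hc
  · exact absurd h2 (by rw [hag m hc]; simp)
  · rwa [hc] at h2
  · exact absurd (h1 q hc) hne

structure Ctx (n : ℕ) (A A' : ℕ → ℕ) : Prop where
  hn : 2 ≤ n
  bound : ∀ k, A k ≤ 1
  per : ∀ k, A (k + n) = A k
  flip : ∀ k, k % n = n - 1 → A' k = 1 - A k
  same : ∀ k, k % n ≠ n - 1 → A' k = A k
  ext : ∀ r, SeqLe O2 (fun k => A (k + r)) A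
  hmin : ∀ r, 0 < r → r < n → (fun k => A (k + r)) ≠ A

namespace Ctx

variable {n : ℕ} {A A' : ℕ → ℕ}

lemma same' (C : Ctx n A A') (k : ℕ) (h1 : k < n - 1) : A' k = A k :=
  C.same k (by rw [Nat.mod_eq_of_lt (by omega)]; omega)

/-- The first difference of `Sh r A` and `A` exists; `strict` case analysis. -/
lemma strict (C : Ctx n A A') (r : ℕ) (hr : 0 < r) (hrn : r < n)
    (hP : ¬ (∀ j, j + r < n → A' (j + r) = A' j)) :
    SeqLt O2 (fun k => A' (k + r)) A' := by
  have hne := C.hmin r hr hrn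
  have hlt : SeqLt O2 (fun k => A (k + r)) A := (C.ext r).resolve_right hne
  obtain ⟨m, hag, hm⟩ := hlt
  simp only at hag hm
  have hdm : A (m + r) ≠ A m := by
    intro h
    rw [h] at hm
    simp at hm
  set p := n - 1 - r with hp
  have hpr : p + r = n - 1 := by omega
  rcases lt_trichotomy m p with hc | hc | hc
  · -- m < p : transfer directly
    refine ⟨m, ?_, ?_⟩
    · intro k hk
      have e1 : A' (k + r) = A (k + r) := C.same' _ (by omega)
      have e2 : A' k = A k := C.same' _ (by omega)
      show A' (k + r) = A' k
      rw [e1, e2]; exact hag k hk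
    · show (∏ k ∈ Finset.range m, O2 (A' (k + r))) * ((A' (m + r) : ℤ) - A' m) < 0
      have e1 : A' (m + r) = A (m + r) := C.same' _ (by omega)
      have e2 : A' m = A m := C.same' _ (by omega)
      have e3 : (∏ k ∈ Finset.range m, O2 (A' (k + r))) = ∏ k ∈ Finset.range m, O2 (A (k + r)) :=
        Finset.prod_congr rfl (fun k hk => by
          rw [C.same' (k + r) (by simp at hk; omega)])
      rw [e1, e2, e3]; exact hm
  · -- m = p : contradicts hP
    exfalso
    apply hP
    intro j hj
    rcases lt_or_eq_of_le (show j ≤ p by omega) with hjp | hjp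
    · have e1 : A' (j + r) = A (j + r) := C.same' _ (by omega)
      have e2 : A' j = A j := C.same' _ (by omega)
      rw [e1, e2]; exact hag j (by omega)
    · rw [hjp]
      have e1 : A' (p + r) = 1 - A (p + r) := C.flip _ (by rw [Nat.mod_eq_of_lt (by omega)]; omega)
      have e2 : A' p = A p := C.same' _ (by omega)
      have b1 := C.bound (p + r)
      have b2 := C.bound p
      rw [hc] at hdm
      omega
  · -- m > p : the dominant case
    set t := m - p - 1 with ht
    have hmt : m = p + 1 + t := by omega
    have hn1 : p + 1 + r = n := by omega
    -- agreements for the (p+1)-shift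
    have hag2 : ∀ j < t, A (j + (p + 1)) = A j := by
      intro j hj
      have h1 : A ((j + (p + 1)) + r) = A (j + (p + 1)) := hag _ (by omega)
      have h2 : (j + (p + 1)) + r = j + n := by omega
      rw [h2, C.per j] at h1
      exact h1.symm
    have hvals : A (t + (p + 1)) = A m ∧ A t = A (m + r) := by
      constructor
      · rw [show t + (p + 1) = m by omega]
      · have : m + r = t + n := by omega
        rw [this, C.per t]
    have hne2 : A (t + (p + 1)) ≠ A t := by rw [hvals.1, hvals.2]; exact fun h => hdm h.symm
    have hlt2 : SeqLt O2 (fun k => A (k + (p + 1))) A := by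
      refine (C.ext (p + 1)).resolve_right ?_
      intro h
      exact hne2 (congrFun h t)
    have hm2 := seqLt_witness hlt2 t (by intro k hk; exact hag2 k hk) hne2
    rw [hvals.1, hvals.2] at hm2
    -- decompose the product in hm
    rw [hmt, Finset.prod_range_add] at hm
    have efac : ∀ j < t, A (p + 1 + j + r) = A (j + (p + 1)) := by
      intro j hj
      have : p + 1 + j + r = j + (p + 1) + r := by ring_nf
      rw [this]
      exact hag _ (by omega)
    have e4 : (∏ j ∈ Finset.range t, O2 (A (p + 1 + j + r)))
        = ∏ j ∈ Finset.range t, O2 (A (j + (p + 1))) :=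
      Finset.prod_congr rfl (fun j hj => by rw [efac j (by simpa using hj)])
    rw [e4] at hm
    set s := ∏ k ∈ Finset.range (p + 1), O2 (A (k + r)) with hs
    set Q := ∏ j ∈ Finset.range t, O2 (A (j + (p + 1))) with hQ
    have hmm : m + r = (p + 1 + t) + r := by omega
    rw [show p + 1 + t = m from hmt.symm] at hm
    -- hm : s * Q * (A (m+r) - A m) < 0 ; hm2 : Q * (A m - A (m+r)) < 0
    have hsneg : s = -1 := by
      have h1 : Q * ((A m : ℤ) - A (m + r)) < 0 := hm2
      have h2 : s * Q * ((A (m + r) : ℤ) - A m) < 0 := hm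
      rcases sgnP_unit (fun k => A (k + r)) (p + 1) with hu | hu
      · exfalso; rw [← hs] at hu; rw [hu] at h2; nlinarith
      · rw [← hs] at hu; exact hu
    -- s in terms of prefix of A
    have hsA : s = ∏ k ∈ Finset.range (p + 1), O2 (A k) :=
      Finset.prod_congr rfl (fun k hk => by rw [hag k (by simp at hk; omega)])
    have hsplit : (∏ k ∈ Finset.range (p + 1), O2 (A k))
        = (∏ k ∈ Finset.range p, O2 (A k)) * O2 (A p) := Finset.prod_range_succ _ _
    set Sp := ∏ k ∈ Finset.range p, O2 (A k) with hSp
    -- final witness p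
    refine ⟨p, ?_, ?_⟩
    · intro k hk
      have e1 : A' (k + r) = A (k + r) := C.same' _ (by omega)
      have e2 : A' k = A k := C.same' _ (by omega)
      show A' (k + r) = A' k
      rw [e1, e2]; exact hag k (by omega)
    · show (∏ k ∈ Finset.range p, O2 (A' (k + r))) * ((A' (p + r) : ℤ) - A' p) < 0
      have e1 : A' (p + r) = 1 - A (p + r) := C.flip _ (by rw [Nat.mod_eq_of_lt (by omega)]; omega)
      have e2 : A' p = A p := C.same' _ (by omega)
      have e3 : A (p + r) = A p := hag p hc
      have e5 : (∏ k ∈ Finset.range p, O2 (A' (k + r))) = Sp := by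
        refine Finset.prod_congr rfl (fun k hk => ?_)
        simp only [Finset.mem_range] at hk
        rw [C.same' (k + r) (by omega), hag k (by omega)]
      rw [e5, e1, e2, e3]
      have hb : A p ≤ 1 := C.bound p
      have hcast : ((1 - A p : ℕ) : ℤ) = 1 - (A p : ℤ) := by omega
      rw [hcast]
      have e6 : Sp * (1 - (A p:ℤ) - (A p:ℤ)) = Sp * O2 (A p) := by
        rw [O2_eq hb]; ring
      have e7 : Sp * O2 (A p) = s := by rw [hsA, hsplit]
      rw [e6, e7, hsneg]
      norm_num

end Ctx
lemma per_mul {f : ℕ → ℕ} {c : ℕ} (h : ∀ k, f (k + c) = f k) : ∀ q k, f (k + q * c) = f k := by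
  intro q
  induction q with
  | zero => simp
  | succ q ih =>
    intro k
    have e : k + (q + 1) * c = (k + q * c) + c := by ring
    rw [e, h, ih]

lemma per_gcd (N : ℕ) : ∀ r s : ℕ, r + s ≤ N → 0 < r → 0 < s → ∀ f : ℕ → ℕ,
    (∀ k, f (k + r) = f k) → (∀ k, f (k + s) = f k) → ∀ k, f (k + Nat.gcd r s) = f k := by
  induction N with
  | zero => intro r s h hr hs; omega
  | succ N ih =>
    intro r s hN hr hs f h1 h2 k
    rcases lt_trichotomy r s with hc | hc | hc
    · have h3 : ∀ k, f (k + (s - r)) = f k := by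
        intro k
        have e := h1 (k + (s - r))
        rw [show k + (s - r) + r = k + s by omega, h2] at e
        exact e.symm
      have e := ih r (s - r) (by omega) hr (by omega) f h1 h3 k
      rwa [Nat.gcd_sub_self_right (le_of_lt hc)] at e
    · subst hc; rw [Nat.gcd_self]; exact h1 k
    · have h3 : ∀ k, f (k + (r - s)) = f k := by
        intro k
        have e := h2 (k + (r - s))
        rw [show k + (r - s) + s = k + r by omega, h1] at e
        exact e.symm
      have e := ih (r - s) s (by omega) (by omega) hs f h3 h2 k
      rwa [Nat.gcd_sub_self_left (le_of_lt hc)] at e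

lemma Ctx.A'per {n : ℕ} {A A' : ℕ → ℕ} (C : Ctx n A A') : ∀ k, A' (k + n) = A' k := by
  intro k
  have hm : (k + n) % n = k % n := Nat.add_mod_right k n
  by_cases h : k % n = n - 1
  · rw [C.flip k h, C.flip (k + n) (by rw [hm]; exact h), C.per k]
  · rw [C.same k h, C.same (k + n) (by rw [hm]; exact h), C.per k]

lemma Ctx.A'mod {n : ℕ} {A A' : ℕ → ℕ} (C : Ctx n A A') (k : ℕ) : A' k = A' (k % n) := by
  conv_lhs => rw [show k = k % n + (k / n) * n by rw [Nat.mod_add_div']]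
  exact per_mul C.A'per (k / n) (k % n)

lemma Ctx.main {n : ℕ} {A A' : ℕ → ℕ} (C : Ctx n A A') (r : ℕ) (hr : 0 < r) (hrn : r < n) :
    SeqLe O2 (fun k => A' (k + r)) A' := by
  have hn := C.hn
  by_cases hP : ∀ j, j + r < n → A' (j + r) = A' j
  · by_cases hP2 : ∀ j, j + (n - r) < n → A' (j + (n - r)) = A' j
    · right
      funext k
      show A' (k + r) = A' k
      have rot : ∀ j, j < n → A' ((j + r) % n) = A' j := by
        intro j hj
        by_cases hcase : j + r < n
        · rw [Nat.mod_eq_of_lt hcase]; exact hP j hcase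
        · have h1 : (j + r) % n = j + r - n := by
            rw [Nat.mod_eq_sub_mod (by omega), Nat.mod_eq_of_lt (by omega)]
          rw [h1]
          have e := hP2 (j + r - n) (by omega)
          rw [show j + r - n + (n - r) = j by omega] at e
          exact e.symm
      calc A' (k + r) = A' ((k + r) % n) := C.A'mod _
        _ = A' ((k % n + r) % n) := by rw [Nat.mod_add_mod]
        _ = A' (k % n) := rot _ (Nat.mod_lt k (by omega))
        _ = A' k := (C.A'mod k).symm
    · left
      obtain ⟨q, hag2, hq2⟩ := C.strict (n - r) (by omega) (by omega) hP2
      simp only at hag2 hq2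
      set p := n - 1 - r with hp
      have hpr : p + r = n - 1 := by omega
      have hagA : ∀ k < p, A (k + r) = A k := by
        intro k hk
        have e := hP k (by omega)
        rwa [C.same' (k + r) (by omega), C.same' k (by omega)] at e
      have hupA : A (p + r) = 1 - A p ∧ A (p + r) ≠ A p := by
        have e := hP p (by omega)
        rw [C.flip (p + r) (by rw [Nat.mod_eq_of_lt (by omega)]; omega),
          C.same' p (by omega)] at e
        have b1 := C.bound (p + r); have b2 := C.bound p
        constructor <;> omega
      have hltA : SeqLt O2 (fun k => A (k + r)) A := (C.ext r).resolve_right (C.hmin r hr hrn)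
      have hw := seqLt_witness hltA p hagA hupA.2
      have eS : (∏ k ∈ Finset.range p, O2 (A (k + r))) = ∏ k ∈ Finset.range p, O2 (A k) :=
        Finset.prod_congr rfl (fun k hk => by rw [hagA k (by simpa using hk)])
      rw [eS] at hw
      set Sp := ∏ k ∈ Finset.range p, O2 (A k) with hSp
      have hb : A p ≤ 1 := C.bound p
      have hd : ((A (p + r) : ℤ)) - A p = 1 - 2 * A p := by
        have := hupA.1
        have b1 := C.bound (p + r)
        omega
      rw [hd] at hw
      have hsneg : Sp * O2 (A p) = -1 := by
        rw [O2_eq hb]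
        rcases sgnP_unit A p with hu | hu <;> rw [← hSp] at hu <;>
          interval_cases h : A p <;> rw [hu] at hw ⊢ <;> simp_all <;> nlinarith
      refine ⟨p + 1 + q, ?_, ?_⟩
      · intro k hk
        show A' (k + r) = A' k
        rcases le_or_gt k p with h | h
        · exact hP k (by omega)
        · have hj : k - p - 1 < q := by omega
          have e1 : A' (k + r) = A' (k - p - 1) := by
            rw [show k + r = (k - p - 1) + n by omega, C.A'per]
          have e2 : A' (k - p - 1 + (n - r)) = A' (k - p - 1) := hag2 _ hj
          rw [e1, ← e2, show k - p - 1 + (n - r) = k by omega]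
      · show (∏ k ∈ Finset.range (p + 1 + q), O2 (A' (k + r))) *
          ((A' ((p + 1 + q) + r) : ℤ) - A' (p + 1 + q)) < 0
        have v1 : A' ((p + 1 + q) + r) = A' q := by
          rw [show (p + 1 + q) + r = q + n by omega, C.A'per]
        have v2 : A' (p + 1 + q) = A' (q + (n - r)) := by
          rw [show p + 1 + q = q + (n - r) by omega]
        rw [Finset.prod_range_add]
        have f1 : (∏ k ∈ Finset.range (p + 1), O2 (A' (k + r))) = Sp * O2 (A p) := by
          rw [show (∏ k ∈ Finset.range (p + 1), O2 (A' (k + r)))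
              = ∏ k ∈ Finset.range (p + 1), O2 (A k) from
            Finset.prod_congr rfl (fun k hk => by
              simp only [Finset.mem_range] at hk
              rw [hP k (by omega), C.same' k (by omega)]),
            Finset.prod_range_succ]
        have f2 : (∏ j ∈ Finset.range q, O2 (A' (p + 1 + j + r)))
            = ∏ j ∈ Finset.range q, O2 (A' (j + (n - r))) := by
          refine Finset.prod_congr rfl (fun j hj => ?_)
          simp only [Finset.mem_range] at hj
          rw [show p + 1 + j + r = j + n by omega, C.A'per, ← hag2 j hj]
        rw [f1, f2, v1, v2, hsneg]
        set Q := ∏ j ∈ Finset.range q, O2 (A' (j + (n - r))) with hQ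
        have e : (-1 * Q) * ((A' q : ℤ) - A' (q + (n - r)))
            = Q * ((A' (q + (n - r)) : ℤ) - A' q) := by ring
        rw [e]
        exact hq2
  · exact Or.inl (C.strict r hr hrn hP)

lemma Ctx.all {n : ℕ} {A A' : ℕ → ℕ} (C : Ctx n A A') (j : ℕ) :
    SeqLe O2 (fun k => A' (k + j)) A' := by
  have hn := C.hn
  have hmodid : (fun k => A' (k + j)) = (fun k => A' (k + j % n)) := by
    funext k
    rw [C.A'mod (k + j), C.A'mod (k + j % n), Nat.add_mod_mod]
  rw [hmodid]
  by_cases h0 : j % n = 0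
  · right; funext k; simp [h0]
  · exact C.main (j % n) (by omega) (Nat.mod_lt j (by omega))

lemma wordSgn_eq_prod (l : List ℕ) :
    wordSgn O2 l = ∏ k ∈ Finset.range l.length, O2 (l.getD k 0) := by
  induction l with
  | nil => simp [wordSgn]
  | cons x xs ih =>
    show O2 x * wordSgn O2 xs = _
    rw [List.length_cons, Finset.prod_range_succ', ih]
    simp [mul_comm]

lemma list_eq_of_getD {l₁ l₂ : List ℕ} (h : l₁.length = l₂.length)
    (h2 : ∀ k < l₁.length, l₁.getD k 0 = l₂.getD k 0) : l₁ = l₂ := by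
  apply List.ext_getElem h
  intro k h1 h2'
  have e := h2 k h1
  rwa [List.getD_eq_getElem _ _ h1, List.getD_eq_getElem _ _ h2'] at e

lemma length_flatten_replicate (m : ℕ) (u : List ℕ) :
    ((List.replicate m u).flatten).length = m * u.length := by
  induction m with
  | zero => simp
  | succ m ih => rw [List.replicate_succ, List.flatten_cons, List.length_append, ih]; ring

lemma getD_flatten_replicate (m : ℕ) (u : List ℕ) (k : ℕ) (hk : k < m * u.length) :
    ((List.replicate m u).flatten).getD k 0 = u.getD (k % u.length) 0 := by
  induction m generalizing k with
  | zero => omega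
  | succ m ih =>
    rw [List.replicate_succ, List.flatten_cons]
    rcases lt_or_ge k u.length with h | h
    · rw [List.getD_append _ _ _ _ h, Nat.mod_eq_of_lt h]
    · have hmul : (m + 1) * u.length = m * u.length + u.length := by ring
      have hu : 0 < u.length := by
        rcases Nat.eq_zero_or_pos u.length with h0 | h0
        · rw [h0, Nat.mul_zero] at hk; omega
        · exact h0
      rw [List.getD_append_right _ _ _ _ h, ih _ (by omega)]
      congr 1
      conv_rhs => rw [show k = (k - u.length) + u.length by omega, Nat.add_mod_right]

lemma flatten_replicate_singleton (m : ℕ) (x : ℕ) :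
    (List.replicate m [x]).flatten = List.replicate m x := by
  induction m with
  | zero => simp
  | succ m ih => rw [List.replicate_succ, List.flatten_cons, ih, List.replicate_succ]; rfl

lemma entries_le_one {a : List ℕ} (h : InSigma E2 (perSeq a)) : ∀ j, a.getD j 0 ≤ 1 := by
  intro j
  rcases lt_or_ge j a.length with hj | hj
  · have := (h j).1
    unfold perSeq at this
    rwa [Nat.mod_eq_of_lt hj] at this
  · rw [List.getD_eq_default _ _ hj]; omega

lemma flipLast_length (a : List ℕ) (ha : a ≠ []) : (flipLast a).length = a.length := by
  have h : 0 < a.length := List.length_pos_iff.mpr ha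
  unfold flipLast
  rw [List.length_append, List.length_take]
  simp
  omega

lemma flipLast_getD_lt (a : List ℕ) (j : ℕ) (hj : j < a.length - 1) :
    (flipLast a).getD j 0 = a.getD j 0 := by
  unfold flipLast
  rw [List.getD_append _ _ _ _ (by rw [List.length_take]; omega)]
  rw [List.getD_eq_getElem _ _ (by rw [List.length_take]; omega),
      List.getElem_take, ← List.getD_eq_getElem _ _ (by omega)]

lemma flipLast_getD_last (a : List ℕ) (ha : a ≠ []) :
    (flipLast a).getD (a.length - 1) 0 = 1 - a.getD (a.length - 1) 0 := by
  have h : 0 < a.length := List.length_pos_iff.mpr ha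
  unfold flipLast
  rw [List.getD_append_right _ _ _ _ (by rw [List.length_take]; omega)]
  rw [List.length_take]
  simp [Nat.min_eq_left (by omega : a.length - 1 ≤ a.length)]

lemma getD_take' (a : List ℕ) (g j : ℕ) (hj : j < g) (hjn : j < a.length) :
    (a.take g).getD j 0 = a.getD j 0 := by
  rw [List.getD_eq_getElem _ _ (by rw [List.length_take]; omega), List.getElem_take,
      ← List.getD_eq_getElem _ _ hjn]

lemma sign_key (y : ℕ) (hy : y ≤ 1) (Tv : ℤ) (h : Tv * O2 y = -1) :
    Tv * O2 (1 - y) = 1 ∧ Tv * (((1 - y : ℕ) : ℤ) - (y : ℤ)) < 0 := by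
  interval_cases y <;> simp [O2] at h ⊢ <;> constructor <;> linarith

lemma bullet3 (a : List ℕ) (hext : ExtremalWord E2 O2 1 a) (hirr : IrreducibleWord a)
    (hsgn : wordSgn O2 a = -1) (hrep : ∀ k : ℕ, a ≠ List.replicate k 1) :
    AdmissibleWord E2 O2 1 (flipLast a) ∧ IsNext E2 O2 1 (flipLast a) a ∧
      TuningPair E2 O2 1 (flipLast a) a := by
  obtain ⟨⟨hne, hins, h0⟩, hadm⟩ := hext
  set n := a.length with hn
  have hn1 : 0 < n := List.length_pos_iff.mpr hne
  have hbd : ∀ j, a.getD j 0 ≤ 1 := entries_le_one hins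
  have hn2 : 2 ≤ n := by
    by_contra hcon
    have hlen1 : a.length = 1 := by omega
    obtain ⟨y, hy⟩ : ∃ y, a = [y] := by
      cases a with
      | nil => simp at hlen1
      | cons z zs =>
        cases zs with
        | nil => exact ⟨z, rfl⟩
        | cons w ws => simp at hlen1
    apply hrep 1
    rw [hy]
    have hy1 : y = 1 := by rw [hy] at h0; simpa using h0
    rw [hy1]
    rfl
  set A := perSeq a with hA
  have hApt : ∀ k, A k = a.getD (k % n) 0 := fun k => rfl
  have hAlt : ∀ j, j < n → A j = a.getD j 0 := fun j hj => by
    rw [hApt, Nat.mod_eq_of_lt hj]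
  set b := flipLast a with hb
  have hblen : b.length = n := flipLast_length a hne
  set A' := perSeq b with hA'
  have hA'pt : ∀ k, A' k = b.getD (k % n) 0 := fun k => by
    simp only [hA', perSeq, hblen]
  -- Ctx fields
  have cbound : ∀ k, A k ≤ 1 := fun k => by rw [hApt]; exact hbd _
  have cper : ∀ k, A (k + n) = A k := fun k => by rw [hApt, hApt, Nat.add_mod_right]
  have cflip : ∀ k, k % n = n - 1 → A' k = 1 - A k := by
    intro k h
    rw [hA'pt, hApt, h, hb]
    rw [show n - 1 = a.length - 1 from by rw [← hn]]
    exact flipLast_getD_last a hne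
  have csame : ∀ k, k % n ≠ n - 1 → A' k = A k := by
    intro k h
    have hlt : k % n < n - 1 := by have := Nat.mod_lt k hn1; omega
    rw [hA'pt, hApt, hb]
    exact flipLast_getD_lt a _ (by rw [← hn]; exact hlt)
  have cext : ∀ r, SeqLe O2 (fun k => A (k + r)) A := by
    intro r
    have e := hadm.2.2 r
    rwa [shift_iterate] at e
  have cmin : ∀ r, 0 < r → r < n → (fun k => A (k + r)) ≠ A := by
    intro r hr hrn hcon
    have hper_r : ∀ k, A (k + r) = A k := fun k => congrFun hcon k
    set g := Nat.gcd r n with hg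
    have hg0 : 0 < g := Nat.gcd_pos_of_pos_left _ hr
    have hgn : g ∣ n := Nat.gcd_dvd_right r n
    have hgr : g ≤ r := Nat.le_of_dvd hr (Nat.gcd_dvd_left r n)
    have hpg : ∀ k, A (k + g) = A k :=
      per_gcd (r + n) r n le_rfl hr (by omega) A hper_r cper
    obtain ⟨m, hmg⟩ : ∃ m, m * g = n := ⟨n / g, Nat.div_mul_cancel hgn⟩
    have hm2 : 2 ≤ m := by
      rcases (by omega : m = 0 ∨ m = 1 ∨ 2 ≤ m) with h | h | h
      · rw [h, zero_mul] at hmg; omega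
      · rw [h, one_mul] at hmg; omega
      · exact h
    apply hirr (a.take g) m hm2
    apply list_eq_of_getD
    · rw [length_flatten_replicate, List.length_take, Nat.min_eq_left (by omega)]
      omega
    · intro k hk
      rw [getD_flatten_replicate m _ k
          (by rw [List.length_take, Nat.min_eq_left (by omega)]; omega)]
      rw [List.length_take, Nat.min_eq_left (by omega)]
      have hkg : k % g < g := Nat.mod_lt k hg0
      rw [getD_take' a g (k % g) hkg (by omega)]
      have e1 : A k = a.getD k 0 := hAlt k (by omega)
      have e2 : A (k % g) = a.getD (k % g) 0 := hAlt _ (by omega)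
      have e3 : A k = A (k % g) := by
        conv_lhs => rw [show k = k % g + (k / g) * g from by rw [Nat.mod_add_div']]
        exact per_mul hpg (k / g) (k % g)
      rw [← e1, e3, e2]
  have C : Ctx n A A' := ⟨hn2, cbound, cper, cflip, csame, cext, cmin⟩
  -- basic properties of b
  have hb0 : b.getD 0 0 = 1 := by
    rw [hb]
    rw [flipLast_getD_lt a 0 (by omega)]
    exact h0
  have cbound' : ∀ k, A' k ≤ 1 := by
    intro k
    by_cases h : k % n = n - 1
    · rw [cflip k h]; omega
    · rw [csame k h]; exact cbound k
  have hinsb : InSigma E2 A' := fun k => ⟨cbound' k, cbound' (k + 1)⟩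
  have hbne : b ≠ [] := by
    intro h
    rw [h] at hblen
    simp at hblen
    omega
  have hperb : PeriodicWord E2 1 b := ⟨hbne, hinsb, hb0⟩
  have hadmb : AdmissibleSeq E2 O2 1 A' := by
    refine ⟨hinsb, ?_, fun m => by rw [shift_iterate]; exact C.all m⟩
    rw [hA'pt, Nat.zero_mod]
    exact hb0
  -- sign computations
  have hxle : a.getD (n - 1) 0 ≤ 1 := hbd _
  have esgn : (∏ k ∈ Finset.range (n - 1), O2 (a.getD k 0)) * O2 (a.getD (n - 1) 0) = -1 := by
    rw [← Finset.prod_range_succ (fun k => O2 (a.getD k 0)) (n - 1)]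
    rw [show n - 1 + 1 = a.length from by omega]
    rw [← wordSgn_eq_prod]
    exact hsgn
  obtain ⟨hsgnb', hltterm⟩ := sign_key _ hxle _ esgn
  have hbent : ∀ k, k < n - 1 → b.getD k 0 = a.getD k 0 := by
    intro k hk
    rw [hb]
    exact flipLast_getD_lt a k (by omega)
  have hblast : b.getD (n - 1) 0 = 1 - a.getD (n - 1) 0 := by
    rw [hb, show n - 1 = a.length - 1 from by rw [← hn]]
    exact flipLast_getD_last a hne
  have hTb : (∏ k ∈ Finset.range (n - 1), O2 (b.getD k 0))
      = ∏ k ∈ Finset.range (n - 1), O2 (a.getD k 0) :=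
    Finset.prod_congr rfl (fun k hk => by rw [hbent k (by simpa using hk)])
  have hsgnb : wordSgn O2 b = 1 := by
    rw [wordSgn_eq_prod, show b.length = (n - 1) + 1 from by omega,
      Finset.prod_range_succ, hTb, hblast]
    exact hsgnb'
  have hwlt : WordLt O2 b a := by
    refine ⟨n - 1, by rw [hblen, ← hn]; omega, ?_, ?_⟩
    · intro k hk
      exact hbent k (by omega)
    · rw [hTb, hblast]
      exact hltterm
  -- betweenness
  have hbetween : ∀ u : List ℕ, PeriodicWord E2 1 u → u.length = b.length →
      ¬(WordLt O2 b u ∧ WordLt O2 u a) := by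
    rintro u hu hulen ⟨⟨j1, hj1, hag1, hlt1⟩, ⟨j2, hj2, hag2, hlt2⟩⟩
    have hubd : ∀ j, u.getD j 0 ≤ 1 := entries_le_one hu.2.1
    have hj1n : j1 < n := by rw [hulen, hblen] at hj1; omega
    have hj2n : j2 < n := by rw [hulen, hblen, ← hn] at hj2; omega
    rcases lt_trichotomy j1 j2 with hc | hc | hc
    · have e1 : u.getD j1 0 = a.getD j1 0 := hag2 j1 hc
      have e2 : b.getD j1 0 = a.getD j1 0 := hbent j1 (by omega)
      rw [e1, e2] at hlt1
      simp at hlt1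
    · subst hc
      have eP : (∏ k ∈ Finset.range j1, O2 (u.getD k 0))
          = ∏ k ∈ Finset.range j1, O2 (b.getD k 0) :=
        Finset.prod_congr rfl (fun k hk => by rw [← hag1 k (by simpa using hk)])
      rw [eP] at hlt2
      rcases lt_or_eq_of_le (show j1 ≤ n - 1 by omega) with hcc | hcc
      · rw [hbent j1 hcc] at hlt1
        nlinarith [hlt1, hlt2]
      · rw [hcc] at hlt1 hlt2
        rw [hblast] at hlt1
        have h1 := hubd (n - 1)
        have h2 := hbd (n - 1)
        rcases sgnP_unit (fun k => b.getD k 0) (n - 1) with hP | hP <;>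
          rw [hP] at hlt1 hlt2 <;> omega
    · have e1 : u.getD j2 0 = b.getD j2 0 := (hag1 j2 hc).symm
      have e2 : b.getD j2 0 = a.getD j2 0 := hbent j2 (by omega)
      rw [e1, e2] at hlt2
      simp at hlt2
  have hpera : PeriodicWord E2 1 a := ⟨hne, hins, h0⟩
  have hnext : IsNext E2 O2 1 b a :=
    ⟨hperb, hpera, by rw [hblen, hn], hwlt, fun u hu hl => hbetween u hu (by rw [hl, hblen, hn])⟩
  have hadmw : AdmissibleWord E2 O2 1 b := ⟨⟨hperb, hadmb⟩, hsgnb⟩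
  exact ⟨hadmw, hnext, hadmw, ⟨hpera, hadm⟩, hsgn, hnext⟩

lemma perSeq_one_one (k : ℕ) : perSeq [1, 1] k = 1 := by
  rcases Nat.mod_two_eq_zero_or_one k with h | h <;> simp [perSeq, h]

lemma minword : MinWord E2 O2 1 [1] := by
  refine ⟨⟨by simp, fun k => ⟨by simp [perSeq, Nat.mod_one], by simp [perSeq, Nat.mod_one]⟩, rfl⟩,
    by simp, by simp [wordSgn, O2], ⟨by simp, fun k => ?_, rfl⟩, ?_⟩
  · have e : ([1] ++ [1] : List ℕ) = [1, 1] := rfl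
    rw [e]
    exact ⟨by rw [perSeq_one_one], by rw [perSeq_one_one]⟩
  · intro u hu hlen
    obtain ⟨x, y, hxy⟩ : ∃ x y, u = [x, y] := by
      cases u with
      | nil => simp at hlen
      | cons x ys =>
        cases ys with
        | nil => simp at hlen
        | cons y zs =>
          cases zs with
          | nil => exact ⟨x, y, rfl⟩
          | cons w ws => simp at hlen
    subst hxy
    have hx : x = 1 := by simpa using hu.2.2
    have hy : y ≤ 1 := by
      have h2 := (hu.2.1 1).1
      simpa [perSeq] using h2
    subst hx
    rcases (by omega : y = 0 ∨ y = 1) with h | h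
    · subst h
      right
      refine ⟨1, by simp, ?_, ?_⟩
      · intro k hk
        interval_cases k
        rfl
      · simp [O2]
    · subst h
      left
      rfl

lemma tunable : Tunable E2 O2 1 [1] := by
  refine ⟨minword, ?_⟩
  intro a hext hirr hsgn
  by_cases hrep : ∀ k : ℕ, a ≠ List.replicate k 1
  · exact Or.inr ⟨flipLast a, (bullet3 a hext hirr hsgn hrep).2.2⟩
  · push_neg at hrep
    obtain ⟨k, hk⟩ := hrep
    left
    have hne := hext.1.1
    have hk1 : k = 1 := by
      rcases (by omega : k = 0 ∨ k = 1 ∨ 2 ≤ k) with h | h | h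
      · subst h; simp at hk; exact absurd hk hne
      · exact h
      · exact absurd (by rw [hk, flatten_replicate_singleton]) (hirr [1] k h)
    exact ⟨1, odd_one, by rw [hk, hk1, flatten_replicate_singleton]⟩

end S6

/-- `(Γ₂, O₂)` is tunable with `w_min = 1`; in particular `[1]` satisfies
condition (1) of tunability, and for every extremal irreducible word `a` with
`sgn(a) = -1` which is not a power of the letter `1`, the word `a'` obtained from `a` by
flipping its last letter is admissible, equals `Prev(a)`, and `(a', a)` is a tuning pair. -/
theorem statement6 :
    Tunable E2 O2 1 [1] ∧ MinWord E2 O2 1 [1] ∧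
      ∀ a : List ℕ, ExtremalWord E2 O2 1 a → IrreducibleWord a → wordSgn O2 a = -1 →
        (∀ k : ℕ, a ≠ List.replicate k 1) →
          AdmissibleWord E2 O2 1 (flipLast a) ∧ IsNext E2 O2 1 (flipLast a) a ∧
            TuningPair E2 O2 1 (flipLast a) a := by
  refine ⟨S6.tunable, S6.minword, ?_⟩
  intro a h1 h2 h3 h4
  exact S6.bullet3 a h1 h2 h3 h4
end

section
/- Assume (Γ, O) is tunable with minimal word w_min. Suppose (a, a') is a tuning pair with a = w_min² (two copies of w_min), and a' contains exactly one letter N. Then for every sufficiently large odd number n, the word a'·w_min^n (a' followed by n copies of w_min) is dominant. -/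
/-!
Write `a' = N t'` and `wmin = N t`, where `N` occurs in neither `t` nor `t'`, and
`w = a' wmin^n`. A suffix of `w N` whose first letter is not `N` begins with a letter `< N`,
so it is smaller than the prefix of `w` of the same length, which begins with `N`. A proper
suffix beginning with `N` must start at a block boundary of `wmin^n`, so it begins with
`wmin N`, while the prefix of `w` begins with `a'`. Since `a = wmin wmin < a'` and `a'` has no
`N` in position `|wmin|`, that comparison is already decided by `wmin N < Pre_{|wmin|+1}(a')`.
-/

open List

theorem List.IsPrefix.getD_eq {α : Type*} {l l' : List α} (h : l <+: l') {i : ℕ}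
    (hi : i < l.length) (d : α) : l'.getD i d = l.getD i d := by
  obtain ⟨x, rfl⟩ := h
  exact getD_append _ _ _ _ hi

theorem List.getD_take_of_lt {α : Type*} (l : List α) {i k : ℕ} (h : i < k) (d : α) :
    (l.take k).getD i d = l.getD i d := by
  simp [getD_eq_getElem?_getD, h]

section WordOrder

variable {O : ℕ → ℤ}

theorem wordLt_cons_of_lt {x y : ℕ} (u v : List ℕ) (h : x < y) : WordLt O (x :: u) (y :: v) :=
  ⟨0, by simp, by simp, by simpa using h⟩

theorem WordLt.of_isPrefix {u v u' v' : List ℕ} (h : WordLt O u v) (hu : u <+: u')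
    (hv : v <+: v') : WordLt O u' v' := by
  obtain ⟨j, hj, hagree, hsign⟩ := h
  have hju : j < u.length := lt_of_lt_of_le hj (min_le_left _ _)
  have hjv : j < v.length := lt_of_lt_of_le hj (min_le_right _ _)
  refine ⟨j, lt_min (hju.trans_le hu.length_le) (hjv.trans_le hv.length_le), fun k hk => ?_, ?_⟩
  · rw [hu.getD_eq (hk.trans hju), hv.getD_eq (hk.trans hjv)]
    exact hagree k hk
  · rwa [Finset.prod_congr rfl fun k hk => by rw [hu.getD_eq ((Finset.mem_range.1 hk).trans hju)],
      hu.getD_eq hju, hv.getD_eq hjv]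

theorem WordLt.take_succ_of_getD_ne {u v : List ℕ} (h : WordLt O u v) {i : ℕ}
    (hi : u.getD i 0 ≠ v.getD i 0) : WordLt O (u.take (i + 1)) (v.take (i + 1)) := by
  obtain ⟨j, hj, hagree, hsign⟩ := h
  have hji : j ≤ i := by
    by_contra! hij
    exact hi (hagree i hij)
  refine ⟨j, ?_, fun k hk => ?_, ?_⟩
  · simp only [length_take]
    omega
  · rw [getD_take_of_lt _ (by omega), getD_take_of_lt _ (by omega)]
    exact hagree k hk
  · rwa [Finset.prod_congr rfl fun k hk => by
      rw [getD_take_of_lt _ (by rw [Finset.mem_range] at hk; omega)], getD_take_of_lt _ (by omega),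
      getD_take_of_lt _ (by omega)]

end WordOrder

section PeriodicWords

variable {E : ℕ → ℕ → Prop} {N : ℕ}

theorem perSeq_mod (w : List ℕ) (i : ℕ) : perSeq w (i % w.length) = perSeq w i := by
  simp only [perSeq, Nat.mod_mod]

theorem perSeq_eq_getD_append {w : List ℕ} (h0 : w.getD 0 0 = N) {i : ℕ} (hi : i ≤ w.length) :
    perSeq w i = (w ++ [N]).getD i 0 := by
  rcases hi.lt_or_eq with hi | rfl
  · rw [perSeq, Nat.mod_eq_of_lt hi, getD_append _ _ _ _ hi]
  · simpa [perSeq] using h0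

theorem inSigma_perSeq_iff {w : List ℕ} (hw : w ≠ []) (h0 : w.getD 0 0 = N) :
    InSigma E (perSeq w) ↔ (w ++ [N]).IsChain E := by
  have hpos : 0 < w.length := length_pos_iff.2 hw
  have hget : ∀ i (hi : i < (w ++ [N]).length), (w ++ [N])[i] = perSeq w i := fun i hi => by
    rw [perSeq_eq_getD_append h0 (by simp at hi; omega), getD_eq_getElem]
  rw [isChain_iff_getElem]
  constructor
  · intro h i hi
    rw [hget, hget]
    exact h i
  · intro h i
    have hlt : i % w.length + 1 < (w ++ [N]).length := by
      simp only [length_append, length_singleton, Nat.add_lt_add_iff_right]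
      exact Nat.mod_lt _ hpos
    have hsucc : perSeq w ((i % w.length) + 1) = perSeq w (i + 1) := by
      rw [← perSeq_mod w (i + 1), ← perSeq_mod w (i % w.length + 1), Nat.add_mod, Nat.mod_mod,
        ← Nat.add_mod]
    have := h _ hlt
    rwa [hget, hget, hsucc, perSeq_mod] at this

theorem PeriodicWord.exists_eq_cons {w : List ℕ} (h : PeriodicWord E N w) :
    ∃ t, w = N :: t := by
  obtain ⟨hw, -, h0⟩ := h
  obtain ⟨x, t, rfl⟩ := ne_nil_iff_exists_cons.1 hw
  exact ⟨t, by simpa using h0⟩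

theorem periodicWord_cons_iff {t : List ℕ} :
    PeriodicWord E N (N :: t) ↔ (N :: t ++ [N]).IsChain E := by
  have h0 : (N :: t).getD 0 0 = N := rfl
  simp only [PeriodicWord, ne_eq, reduceCtorEq, not_false_eq_true, true_and, h0, and_true,
    inSigma_perSeq_iff (cons_ne_nil N t) h0]

theorem PeriodicWord.append {u v : List ℕ} (hu : PeriodicWord E N u) (hv : PeriodicWord E N v) :
    PeriodicWord E N (u ++ v) := by
  obtain ⟨t, rfl⟩ := hu.exists_eq_cons
  obtain ⟨t', rfl⟩ := hv.exists_eq_cons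
  rw [periodicWord_cons_iff] at hu hv
  rw [cons_append, periodicWord_cons_iff]
  simpa using
    hu.append_overlap (l₂ := [N]) (l₃ := t' ++ [N]) (by simpa using hv) (cons_ne_nil N [])

theorem PeriodicWord.flatten_replicate {u : List ℕ} (hu : PeriodicWord E N u) {n : ℕ}
    (hn : 0 < n) : PeriodicWord E N (replicate n u).flatten := by
  induction n with
  | zero => exact absurd hn (lt_irrefl 0)
  | succ n ih =>
    rcases n.eq_zero_or_pos with rfl | hn
    · simpa using hu
    · rw [replicate_succ, flatten_cons]
      exact hu.append (ih hn)

theorem PeriodicWord.le_of_mem (hE : ∀ i j, E i j → i ≤ N) {w : List ℕ}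
    (hw : PeriodicWord E N w) {x : ℕ} (hx : x ∈ w) : x ≤ N := by
  obtain ⟨i, hi, rfl⟩ := getElem_of_mem hx
  have := hE _ _ (hw.2.1 i)
  rwa [perSeq, Nat.mod_eq_of_lt hi, getD_eq_getElem] at this

end PeriodicWords

section SingleOccurrence

variable {N : ℕ} {t : List ℕ}

theorem notMem_of_count_cons_eq_one (h : (N :: t).count N = 1) : N ∉ t := by
  rw [count_cons_self, Nat.add_eq_right, count_eq_zero] at h
  exact h

theorem getD_ne_of_not_mem (ht : N ∉ t) {i : ℕ} (hi : i < t.length) : t.getD i 0 ≠ N := by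
  rw [getD_eq_getElem _ _ hi]
  exact fun h => ht (h ▸ getElem_mem hi)

theorem drop_cons_append_of_length_lt {a : ℕ} {q : ℕ} (h : t.length < q) (x : List ℕ) :
    (a :: t ++ x).drop q = x.drop (q - (t.length + 1)) := by
  rw [drop_append, drop_eq_nil_of_le (by simp; omega), nil_append, length_cons]

theorem length_lt_of_head?_drop_eq (ht : N ∉ t) (v : List ℕ) {q : ℕ} (hq : 0 < q)
    (h : ((N :: t ++ v).drop q).head? = some N) : t.length < q := by
  by_contra! hqt
  obtain ⟨q, rfl⟩ := Nat.exists_eq_add_one.2 hq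
  rw [head?_drop, cons_append, getElem?_cons_succ, getElem?_append_left (by omega)] at h
  exact ht (mem_of_getElem? h)

theorem exists_drop_flatten_replicate_append (ht : N ∉ t) (v : List ℕ) {n q : ℕ}
    (hq : q < (replicate n (N :: t)).flatten.length)
    (h : (((replicate n (N :: t)).flatten ++ v).drop q).head? = some N) :
    ∃ r, 0 < r ∧
      ((replicate n (N :: t)).flatten ++ v).drop q = (replicate r (N :: t)).flatten ++ v := by
  induction n generalizing q with
  | zero => simp at hq
  | succ n ih =>
    rcases q.eq_zero_or_pos with rfl | hq0
    · exact ⟨n + 1, n.succ_pos, rfl⟩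
    · simp only [replicate_succ, flatten_cons, append_assoc, length_append, length_cons]
        at h hq ⊢
      have hlen := length_lt_of_head?_drop_eq ht _ hq0 (by simpa using h)
      rw [drop_cons_append_of_length_lt hlen] at h ⊢
      exact ih (by omega) h

theorem exists_drop_eq_of_head?_eq {t' : List ℕ} (ht : N ∉ t) (ht' : N ∉ t') {n p : ℕ}
    (hp0 : 0 < p) (hp : p < (N :: t' ++ (replicate n (N :: t)).flatten).length)
    (h : ((N :: t' ++ (replicate n (N :: t)).flatten ++ [N]).drop p).head? = some N) :
    ∃ y, (N :: t' ++ (replicate n (N :: t)).flatten ++ [N]).drop p = N :: t ++ N :: y := by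
  rw [append_assoc] at h ⊢
  have hlen := length_lt_of_head?_drop_eq ht' _ hp0 h
  rw [drop_cons_append_of_length_lt hlen] at h ⊢
  simp only [length_append, length_cons] at hp
  obtain ⟨r, hr, hdrop⟩ := exists_drop_flatten_replicate_append ht [N] (by omega) h
  obtain ⟨r, rfl⟩ := Nat.exists_eq_add_one.2 hr
  rw [hdrop, replicate_succ, flatten_cons, append_assoc]
  cases r with
  | zero => exact ⟨[], by simp⟩
  | succ r => exact ⟨t ++ (replicate r (N :: t)).flatten ++ [N], by simp [replicate_succ]⟩

end SingleOccurrence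

theorem dominantWord_cons_append_flatten_replicate
    {E : ℕ → ℕ → Prop} {O : ℕ → ℤ} {N : ℕ} (hE : ∀ i j, E i j → i ≤ N)
    {t t' : List ℕ} (ht : N ∉ t) (ht' : N ∉ t')
    (hw : PeriodicWord E N (N :: t)) (ha' : PeriodicWord E N (N :: t'))
    (hlt : WordLt O (N :: t ++ [N]) ((N :: t').take (t.length + 2))) {n : ℕ} (hn : 0 < n) :
    DominantWord E O N (N :: t' ++ (replicate n (N :: t)).flatten) := by
  set w := N :: t' ++ (replicate n (N :: t)).flatten
  have hper : PeriodicWord E N w := ha'.append (hw.flatten_replicate hn)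
  refine ⟨hper, fun k hk2 hkw => ?_⟩
  have hs_len : ((w ++ [N]).drop (w.length + 1 - k)).length = k := by
    simp only [length_drop, length_append, length_singleton]
    omega
  obtain ⟨x, s, hs⟩ : ∃ x s, (w ++ [N]).drop (w.length + 1 - k) = x :: s :=
    ne_nil_iff_exists_cons.1 (length_pos_iff.1 (by omega))
  rcases eq_or_ne x N with rfl | hx
  · obtain ⟨y, hy⟩ := exists_drop_eq_of_head?_eq (n := n) (p := w.length + 1 - k) ht ht'
      (by omega) (by show _ < w.length; omega) (by rw [hs]; rfl)
    refine hlt.of_isPrefix ⟨y, by rw [hy]; simp⟩ (prefix_take_iff.2 ⟨?_, ?_⟩)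
    · exact (take_prefix _ _).trans (prefix_append _ _)
    · rw [← hs_len, hy]
      simp
  · have hxN : x ≤ N := by
      have hmem : x ∈ w ++ [N] := mem_of_mem_drop (hs ▸ mem_cons_self)
      rcases mem_append.1 hmem with hxw | hxN
      · exact hper.le_of_mem hE hxw
      · exact (mem_singleton.1 hxN).le
    obtain ⟨v, hv⟩ : ∃ v, w.take k = N :: v := ⟨_, take_cons (by omega)⟩
    rw [hs, hv]
    exact wordLt_cons_of_lt _ _ (lt_of_le_of_ne hxN hx)

/-- Assume `(Γ, O)` is tunable with minimal word `wmin`. If `(a, a')` is a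
tuning pair with `a = wmin²` and `a'` contains exactly one letter `N`, then for every
sufficiently large odd `n`, the word `a'·wmin^n` is dominant. -/
theorem statement9 (E : ℕ → ℕ → Prop) (O : ℕ → ℤ) (N : ℕ) (hG : GoodGraph E O N)
    (wmin : List ℕ) (htun : Tunable E O N wmin)
    (a a' : List ℕ) (hpair : TuningPair E O N a a')
    (ha : a = wmin ++ wmin) (ha' : a'.count N = 1) :
    ∃ M : ℕ, ∀ n : ℕ, M ≤ n → Odd n →
      DominantWord E O N (a' ++ (List.replicate n wmin).flatten) := by
  obtain ⟨⟨hw, hcount, -⟩, -⟩ := htun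
  obtain ⟨-, -, -, -, ha'per, hlen, hlt, -⟩ := hpair
  obtain ⟨t, rfl⟩ := hw.exists_eq_cons
  obtain ⟨t', rfl⟩ := ha'per.exists_eq_cons
  subst ha
  have ht' : N ∉ t' := notMem_of_count_cons_eq_one ha'
  have hlen' : t'.length = 2 * t.length + 1 := by
    simp only [length_append, length_cons] at hlen
    omega
  -- `a < a'` is decided before the second `N` of `a = (N t)(N t)`, which `a'` lacks.
  have hlt' : WordLt O (N :: t ++ [N]) ((N :: t').take (t.length + 2)) := by
    have hne : (N :: t ++ N :: t).getD (t.length + 1) 0 ≠ (N :: t').getD (t.length + 1) 0 := by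
      simpa using (getD_ne_of_not_mem ht' (by omega : t.length < t'.length)).symm
    simpa [take_append, take_of_length_le] using hlt.take_succ_of_getD_ne hne
  exact ⟨1, fun n hn _ => dominantWord_cons_append_flatten_replicate (fun i j h => (hG.1 i j h).1)
    (notMem_of_count_cons_eq_one hcount) ht' hw ha'per hlt' hn⟩
end
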